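/- arXiv:1803.10700 — 8 statements merged into one kernel-verified Lean document; each statement's English description precedes it below -/
import Mathlib

section
/- Let (x_m) be a sequence of positive reals with x_m → ∞ and γ(x_m) →cir λ for some λ ∈ (c⁻¹,1]. Then for every y > 0, γ(x_m · y) →cir h_λ(y), where h_λ(y) = λy/c^{⌈log_c(λy)⌉}. -/
open Set Filter Topology Real

/-!
Say `RatioTendsto k z t` when `z m / k (N m) → t` along some indices `N m → ∞`. As
`k (n + 1) / k n → c`, shifting `N` by `j` replaces `t` by `t / c ^ j`, so `t` can be normalized
into `(c⁻¹, 1]`. For such `t`, eventually `k (N m - 1) < z m < k (N m + 1)`, so `γ (z m)` is one of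
`z m / k (N m)` and `z m / k (N m + 1)`, which tend to `t` and `t / c`: this is circular
convergence to `t`. Conversely `γ (x m) →cir λ` gives `RatioTendsto k x λ`, taking the previous
index whenever `γ (x m)` is close to `c⁻¹`. Then `RatioTendsto k (x · y) (λ y)`, and normalizing
with `j = ⌈log_c (λ y)⌉` gives `h_λ(y)`.
-/

/-- Circular convergence of a sequence `u` to `lam ∈ (c⁻¹, 1]`: either `lam ∈ (c⁻¹,1)` and
`u → lam` in the usual sense, or `lam = 1` and every limit point of `u` lies in `{c⁻¹, 1}`. -/
def CirTendsto (c : ℝ) (u : ℕ → ℝ) (lam : ℝ) : Prop :=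
  (lam ∈ Set.Ioo c⁻¹ 1 ∧ Filter.Tendsto u Filter.atTop (nhds lam)) ∨
  (lam = 1 ∧ ∀ L : ℝ, MapClusterPt L Filter.atTop u → L = c⁻¹ ∨ L = 1)

/-- `h_lam(y) = lam·y / c^{⌈log_c (lam·y)⌉}`. -/
noncomputable def hFun (c lam y : ℝ) : ℝ :=
  lam * y / c ^ (⌈Real.log (lam * y) / Real.log c⌉ : ℤ)

theorem MapClusterPt.eq_or_eq_of_eventually_eq_or_eq {ι X : Type*} [TopologicalSpace X]
    [T2Space X] {l : Filter ι} {f r s : ι → X} {a b L : X} (hr : Tendsto r l (𝓝 a))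
    (hs : Tendsto s l (𝓝 b)) (hf : ∀ᶠ i in l, f i = r i ∨ f i = s i)
    (hL : MapClusterPt L l f) : L = a ∨ L = b := by
  have hf' : Tendsto f l (𝓝 a ⊔ 𝓝 b) := fun S hS => mem_map.2 <| by
    filter_upwards [hr (mem_sup.1 hS).1, hs (mem_sup.1 hS).2, hf] with i hri hsi hfi
    rcases hfi with h | h <;> rw [mem_preimage, h] <;> assumption
  rcases clusterPt_sup.1 (hL.clusterPt.mono hf') with h | h
  exacts [.inl (eq_of_nhds_neBot h), .inr (eq_of_nhds_neBot h)]

theorem eventually_lt_of_tendsto_div {ι : Type*} {l : Filter ι} {d z w : ι → ℝ} {a b : ℝ}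
    (hd : ∀ᶠ i in l, 0 < d i) (hz : Tendsto (fun i => z i / d i) l (𝓝 a))
    (hw : Tendsto (fun i => w i / d i) l (𝓝 b)) (hab : a < b) : ∀ᶠ i in l, z i < w i := by
  filter_upwards [hz.eventually_lt hw hab, hd] with i h hdi
  exact (div_lt_div_iff_of_pos_right hdi).1 h

theorem tendsto_ite_mul_of_mapClusterPt {g ρ : ℕ → ℝ} {c θ : ℝ} (hc : c ≠ 0)
    (hρ : Tendsto ρ atTop (𝓝 c)) (hθ : c⁻¹ < θ) (hθ1 : θ < 1) (hg : ∀ᶠ m in atTop, g m ∈ Icc 0 1)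
    (hclus : ∀ L, MapClusterPt L atTop g → L = c⁻¹ ∨ L = 1) :
    Tendsto (fun m => if g m < θ then g m * ρ m else g m) atTop (𝓝 1) := by
  refine tendsto_of_subseq_tendsto fun ns hns => ?_
  obtain ⟨μ, -, φ, hφ, hgφ⟩ := isCompact_Icc.tendsto_subseq' (hns.eventually hg).frequently
  have hψ : Tendsto (ns ∘ φ) atTop atTop := hns.comp hφ.tendsto_atTop
  refine ⟨φ, ?_⟩
  rcases hclus μ (hgφ.mapClusterPt.of_comp hψ) with rfl | rfl
  · have hlim : Tendsto (fun i => g (ns (φ i)) * ρ (ns (φ i))) atTop (𝓝 1) := by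
      rw [← inv_mul_cancel₀ hc]
      exact hgφ.mul (hρ.comp hψ)
    refine hlim.congr' ?_
    filter_upwards [hgφ.eventually_lt_const hθ] with i hi
    simp only [Function.comp_apply] at hi ⊢
    rw [if_pos hi]
  · refine hgφ.congr' ?_
    filter_upwards [hgφ.eventually_const_lt hθ1] with i hi
    simp only [Function.comp_apply] at hi ⊢
    rw [if_neg hi.not_gt]

def RatioTendsto (u z : ℕ → ℝ) (t : ℝ) : Prop :=
  ∃ N : ℕ → ℕ, Tendsto N atTop atTop ∧ Tendsto (fun m => z m / u (N m)) atTop (𝓝 t)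

namespace RatioTendsto

variable {u z : ℕ → ℝ} {c t : ℝ}

theorem div (hu : ∀ᶠ n in atTop, u n ≠ 0)
    (huc : Tendsto (fun n => u (n + 1) / u n) atTop (𝓝 c)) (hc : c ≠ 0)
    (h : RatioTendsto u z t) : RatioTendsto u z (t / c) := by
  obtain ⟨N, hN, hzN⟩ := h
  refine ⟨fun m => N m + 1, (tendsto_add_atTop_nat 1).comp hN,
    (hzN.div (huc.comp hN) hc).congr' ?_⟩
  filter_upwards [hN.eventually hu] with m hm
  simp only [Pi.div_apply, Function.comp_apply]
  field_simp

theorem mul (hu : ∀ᶠ n in atTop, u n ≠ 0)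
    (huc : Tendsto (fun n => u (n + 1) / u n) atTop (𝓝 c))
    (h : RatioTendsto u z t) : RatioTendsto u z (t * c) := by
  obtain ⟨N, hN, hzN⟩ := h
  have hN' : Tendsto (fun m => N m - 1) atTop atTop := (tendsto_sub_atTop_nat 1).comp hN
  refine ⟨fun m => N m - 1, hN', (hzN.mul (huc.comp hN')).congr' ?_⟩
  filter_upwards [hN'.eventually hu, hN.eventually hu, hN.eventually_ge_atTop 1] with m hm hm' hm1
  simp only [Function.comp_apply, Nat.sub_add_cancel hm1]
  field_simp

theorem div_zpow (hu : ∀ᶠ n in atTop, u n ≠ 0)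
    (huc : Tendsto (fun n => u (n + 1) / u n) atTop (𝓝 c)) (hc : c ≠ 0)
    (h : RatioTendsto u z t) (j : ℤ) : RatioTendsto u z (t / c ^ j) := by
  induction j with
  | zero => simpa using h
  | succ i ih => simpa only [zpow_add_one₀ hc, div_mul_eq_div_div] using ih.div hu huc hc
  | pred i ih =>
    simpa only [zpow_sub_one₀ hc, div_mul_eq_div_div, div_inv_eq_mul] using ih.mul hu huc

end RatioTendsto

section Blocks

variable {c : ℝ} {k : ℕ → ℕ} {γ : ℝ → ℝ}

theorem natCast_pos_of_strictMono_succ (hk : StrictMono k) (n : ℕ) : (0 : ℝ) < k (n + 1) :=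
  Nat.cast_pos.2 ((Nat.zero_le _).trans_lt (hk n.lt_succ_self))

theorem cirTendsto_of_ratioTendsto (hc : 1 < c) (hk : StrictMono k)
    (hkc : Tendsto (fun n => (k (n + 1) : ℝ) / k n) atTop (𝓝 c))
    (hγ : ∀ x : ℝ, ∀ n : ℕ, (k n : ℝ) < x → x ≤ (k (n + 1) : ℝ) → γ x = x / (k (n + 1) : ℝ))
    {z : ℕ → ℝ} {t : ℝ} (hz : RatioTendsto (fun n => (k n : ℝ)) z t) (ht : t ∈ Ioc c⁻¹ 1) :
    CirTendsto c (fun m => γ (z m)) t := by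
  obtain ⟨N, hN, hzN⟩ := hz
  set P : ℕ → ℕ := fun m => N m - 1
  have hP : Tendsto P atTop atTop := (tendsto_sub_atTop_nat 1).comp hN
  have hzP : Tendsto (fun m => z m / k (P m + 1)) atTop (𝓝 t) := by
    refine hzN.congr' ?_
    filter_upwards [hN.eventually_ge_atTop 1] with m hm
    rw [Nat.sub_add_cancel hm]
  have hd : ∀ᶠ m in atTop, (0 : ℝ) < k (P m + 1) :=
    .of_forall fun m => natCast_pos_of_strictMono_succ hk _
  have hρ : Tendsto (fun m => (k (P m + 2) : ℝ) / k (P m + 1)) atTop (𝓝 c) :=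
    hkc.comp ((tendsto_add_atTop_nat 1).comp hP)
  have hlow : ∀ᶠ m in atTop, (k (P m) : ℝ) < z m := by
    refine eventually_lt_of_tendsto_div hd ?_ hzP ht.1
    simpa only [Function.comp_apply, inv_div] using (hkc.comp hP).inv₀ (zero_lt_one.trans hc).ne'
  rcases ht.2.lt_or_eq with ht1 | rfl
  · have hup : ∀ᶠ m in atTop, z m < k (P m + 1) :=
      eventually_lt_of_tendsto_div hd hzP
        (tendsto_const_nhds.congr' (hd.mono fun m hm => (div_self hm.ne').symm)) ht1
    refine .inl ⟨⟨ht.1, ht1⟩, hzP.congr' ?_⟩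
    filter_upwards [hlow, hup] with m h₁ h₂
    exact (hγ _ _ h₁ h₂.le).symm
  · have hup : ∀ᶠ m in atTop, z m < k (P m + 2) :=
      eventually_lt_of_tendsto_div hd hzP hρ hc
    have hs : Tendsto (fun m => z m / k (P m + 2)) atTop (𝓝 c⁻¹) := by
      refine (one_div c ▸ hzP.div hρ (zero_lt_one.trans hc).ne').congr' ?_
      filter_upwards [hd] with m hm
      simp only [Pi.div_apply]
      field_simp
    refine .inr ⟨rfl, fun L hL => hL.eq_or_eq_of_eventually_eq_or_eq hs hzP ?_⟩
    filter_upwards [hlow, hup] with m h₁ h₂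
    by_cases h : z m ≤ k (P m + 1)
    · exact .inr (hγ _ _ h₁ h)
    · exact .inl (hγ _ _ (not_le.1 h) h₂.le)

theorem exists_natCast_lt_le (hk : StrictMono k) {x : ℝ} (hx : (k 0 : ℝ) < x) :
    ∃ n, (k n : ℝ) < x ∧ x ≤ k (n + 1) := by
  have hex : ∃ n, x ≤ k (n + 1) := by
    obtain ⟨n, hn⟩ := exists_nat_ge x
    exact ⟨n, hn.trans (Nat.cast_le.2 ((hk.id_le n).trans (hk.monotone n.le_succ)))⟩
  refine ⟨Nat.find hex, ?_, Nat.find_spec hex⟩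
  cases h : Nat.find hex with
  | zero => exact hx
  | succ n => exact not_le.1 (Nat.find_min hex (by omega))

theorem exists_tendsto_natCast_lt_le (hk : StrictMono k) {x : ℕ → ℝ}
    (hx : Tendsto x atTop atTop) : ∃ n : ℕ → ℕ, Tendsto n atTop atTop ∧
      ∀ᶠ m in atTop, (k (n m) : ℝ) < x m ∧ x m ≤ k (n m + 1) := by
  have : ∀ m, ∃ n, (k 0 : ℝ) < x m → (k n : ℝ) < x m ∧ x m ≤ k (n + 1) := fun m => by
    by_cases h : (k 0 : ℝ) < x m
    · exact (exists_natCast_lt_le hk h).imp fun _ hn _ => hn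
    · exact ⟨0, fun h' => absurd h' h⟩
  choose n hn using this
  have hev : ∀ᶠ m in atTop, (k (n m) : ℝ) < x m ∧ x m ≤ k (n m + 1) :=
    (hx.eventually_gt_atTop _).mono hn
  refine ⟨n, tendsto_atTop.2 fun M => ?_, hev⟩
  filter_upwards [hx.eventually_gt_atTop (k M : ℝ), hev] with m hm h
  exact Nat.lt_succ_iff.1 (hk.lt_iff_lt.1 (Nat.cast_lt.1 (hm.trans_le h.2)))

theorem ratioTendsto_of_cirTendsto (hc : 1 < c)
    (hk : StrictMono k) (hkc : Tendsto (fun n => (k (n + 1) : ℝ) / k n) atTop (𝓝 c))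
    (hγ : ∀ x : ℝ, ∀ n : ℕ, (k n : ℝ) < x → x ≤ (k (n + 1) : ℝ) → γ x = x / (k (n + 1) : ℝ))
    {x : ℕ → ℝ} (hx : Tendsto x atTop atTop) {lam : ℝ}
    (hcir : CirTendsto c (fun m => γ (x m)) lam) :
    RatioTendsto (fun n => (k n : ℝ)) x lam := by
  obtain ⟨n, hn, hxn⟩ := exists_tendsto_natCast_lt_le hk hx
  set g : ℕ → ℝ := fun m => x m / k (n m + 1)
  have hγg : (fun m => γ (x m)) =ᶠ[atTop] g := hxn.mono fun m hm => hγ _ _ hm.1 hm.2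
  rcases hcir with ⟨-, hlim⟩ | ⟨rfl, hclus⟩
  · exact ⟨fun m => n m + 1, (tendsto_add_atTop_nat 1).comp hn, hlim.congr' hγg⟩
  have hc' : c⁻¹ < 1 := inv_lt_one_of_one_lt₀ hc
  have hg : ∀ᶠ m in atTop, g m ∈ Icc 0 1 := by
    filter_upwards [hxn] with m hm
    have hd := natCast_pos_of_strictMono_succ hk (n m)
    exact ⟨div_nonneg ((Nat.cast_nonneg _).trans hm.1.le) hd.le, div_le_one_of_le₀ hm.2 hd.le⟩
  -- near `c⁻¹`, the previous index `n m` brings the ratio near `c⁻¹ * c = 1`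
  have hlim := tendsto_ite_mul_of_mapClusterPt (zero_lt_one.trans hc).ne' (hkc.comp hn)
    (left_lt_add_div_two.2 hc') (add_div_two_lt_right.2 hc') hg
    fun L hL => hclus L (hγg.mapClusterPt_iff.2 hL)
  refine ⟨fun m => if g m < (c⁻¹ + 1) / 2 then n m else n m + 1,
    tendsto_atTop_mono (fun m => by split_ifs <;> omega) hn, hlim.congr fun m => ?_⟩
  by_cases h : g m < (c⁻¹ + 1) / 2
  · have hd := (natCast_pos_of_strictMono_succ hk (n m)).ne'
    simp only [if_pos h, g, Function.comp_apply]
    field_simp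
  · simp only [if_neg h, g]

end Blocks

theorem hFun_mem_Ioc {c lam y : ℝ} (hc : 1 < c) (ht : 0 < lam * y) :
    hFun c lam y ∈ Ioc c⁻¹ 1 := by
  set J : ℤ := ⌈Real.log (lam * y) / Real.log c⌉
  have hlogc : 0 < Real.log c := Real.log_pos hc
  have hpos : 0 < hFun c lam y := div_pos ht (zpow_pos (zero_lt_one.trans hc) J)
  have hlog : Real.log (hFun c lam y) = Real.log (lam * y) - J * Real.log c := by
    rw [hFun, Real.log_div ht.ne' (zpow_pos (zero_lt_one.trans hc) J).ne', Real.log_zpow]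
  have hJ₁ : ((J : ℝ) - 1) * Real.log c < Real.log (lam * y) :=
    (lt_div_iff₀ hlogc).1 (by linarith [Int.ceil_lt_add_one (Real.log (lam * y) / Real.log c)])
  have hJ₂ : Real.log (lam * y) ≤ J * Real.log c := (div_le_iff₀ hlogc).1 (Int.le_ceil _)
  constructor
  · rw [← Real.log_lt_log_iff (inv_pos.2 (zero_lt_one.trans hc)) hpos, Real.log_inv, hlog]
    linarith
  · rw [← Real.log_nonpos_iff hpos.le, hlog]
    linarith

theorem stmt_2_general (c : ℝ) (hc : 1 < c)
    (k : ℕ → ℕ) (hk : StrictMono k)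
    (hkc : Filter.Tendsto (fun n => ((k (n + 1) : ℝ) / (k n : ℝ))) Filter.atTop (nhds c))
    (γ : ℝ → ℝ)
    (hγ : ∀ x : ℝ, ∀ n : ℕ, (k n : ℝ) < x → x ≤ (k (n + 1) : ℝ) → γ x = x / (k (n + 1) : ℝ))
    (x : ℕ → ℝ) (hx : Filter.Tendsto x Filter.atTop Filter.atTop)
    (lam : ℝ) (hlam : lam ∈ Set.Ioc c⁻¹ 1)
    (hcir : CirTendsto c (fun m => γ (x m)) lam) :
    ∀ y > (0 : ℝ), CirTendsto c (fun m => γ (x m * y)) (hFun c lam y) := by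
  intro y hy
  obtain ⟨N, hN, hxN⟩ := ratioTendsto_of_cirTendsto hc hk hkc hγ hx hcir
  have hxy : RatioTendsto (fun n => (k n : ℝ)) (fun m => x m * y) (lam * y) :=
    ⟨N, hN, by simpa only [mul_div_right_comm] using hxN.mul_const y⟩
  have hk0 : ∀ᶠ n in atTop, (k n : ℝ) ≠ 0 :=
    (tendsto_natCast_atTop_atTop.comp hk.tendsto_atTop).eventually_ne_atTop 0
  have hlam0 : 0 < lam := (inv_pos.2 (zero_lt_one.trans hc)).trans hlam.1
  exact cirTendsto_of_ratioTendsto hc hk hkc hγ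
    (hxy.div_zpow hk0 hkc (zero_lt_one.trans hc).ne' _) (hFun_mem_Ioc hc (mul_pos hlam0 hy))

/-- If `x_m → ∞` and the position parameters `γ(x_m)` converge circularly to
`lam ∈ (c⁻¹,1]`, then for every `y > 0`, `γ(x_m · y)` converges circularly to `h_lam(y)`. -/
theorem stmt_2 (c : ℝ) (hc : 1 < c)
    (k : ℕ → ℕ) (hk : StrictMono k) (hk1 : 1 ≤ k 0)
    (hkc : Filter.Tendsto (fun n => ((k (n + 1) : ℝ) / (k n : ℝ))) Filter.atTop (nhds c))
    (γ : ℝ → ℝ)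
    (hγ : ∀ x : ℝ, ∀ n : ℕ, (k n : ℝ) < x → x ≤ (k (n + 1) : ℝ) → γ x = x / (k (n + 1) : ℝ))
    (hγ0 : ∀ x : ℝ, 0 < x → x ≤ (k 0 : ℝ) → γ x = x / (k 0 : ℝ))
    (x : ℕ → ℝ) (hx : Filter.Tendsto x Filter.atTop Filter.atTop)
    (lam : ℝ) (hlam : lam ∈ Set.Ioc c⁻¹ 1)
    (hcir : CirTendsto c (fun m => γ (x m)) lam) :
    ∀ y > (0 : ℝ), CirTendsto c (fun m => γ (x m * y)) (hFun c lam y) :=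
  stmt_2_general c hc k hk hkc γ hγ x hx lam hlam hcir
end

section
/- For λ ∈ [c⁻¹,1] let ν_λ be the Borel probability measure on [1,∞) with distribution function ν_λ((−∞,x]) = 1 − x^{−α} M(xλ^{1/α})/M(λ^{1/α}) for x ≥ 1 (and 0 for x < 1). Then the uniform subexponentiality property holds: lim_{x→∞} sup_{λ∈[c⁻¹,1]} | (ν_λ * ν_λ)((x,∞)) / ν_λ((x,∞)) − 2 | = 0, where * denotes convolution of measures. -/
/-!
The tail `T_λ(x) = x^(-α) M(x λ^(1/α)) / M(λ^(1/α))` of `ν_λ` is comparable to `x^(-α)` with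
constants independent of `λ`, because `M` is pinched between two positive constants; hence the
tails vanish and have dominated variation uniformly in `λ`. Since `M` is continuous and
log-periodic, `M ∘ exp` is uniformly continuous, so `T_λ(x - A) / T_λ(x) → 1` uniformly in `λ`.
For every probability measure on `[0, ∞)` one has
`2 T(x) - T(x)^2 ≤ (μ ∗ μ)(x, ∞) ≤ 2 T(x - A) + 2 T(A) T(x / 2)`,
and dividing by `T(x)` both bounds tend to `2` uniformly once `A` is chosen large.
-/

open Set Filter Topology Real MeasureTheory

theorem Function.Periodic.uniformContinuous_of_continuous {β : Type*} [PseudoMetricSpace β]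
    {f : ℝ → β} {p : ℝ} (hp : 0 < p) (hf : Function.Periodic f p) (hc : Continuous f) :
    UniformContinuous f := by
  have hK := (isCompact_Icc (a := -p) (b := 2 * p)).uniformContinuousOn_of_continuous
    hc.continuousOn
  rw [Metric.uniformContinuousOn_iff] at hK
  rw [Metric.uniformContinuous_iff]
  intro ε hε
  obtain ⟨δ, hδ, hfδ⟩ := hK ε hε
  refine ⟨min δ p, lt_min hδ hp, fun {a b} hab => ?_⟩
  -- translating `a` into `[0, p)` moves `b` into `[-p, 2p]`
  set n := toIcoDiv hp 0 a
  have ha := toIcoMod_mem_Ico' hp a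
  rw [← self_sub_toIcoDiv_zsmul] at ha
  rw [← dist_sub_right a b (n • p)] at hab
  have hab' := abs_lt.1 (Real.dist_eq _ _ ▸ (lt_min_iff.1 hab).2)
  rw [← hf.sub_zsmul_eq n, ← hf.sub_zsmul_eq (x := b) n]
  exact hfδ _ ⟨by linarith [ha.1], by linarith [ha.2]⟩ _
    ⟨by linarith [ha.1, hab'.2], by linarith [ha.2, hab'.1]⟩ (lt_min_iff.1 hab).1

lemma measureReal_conv_Ioi (μ ν : Measure ℝ) (x : ℝ) :
    (μ ∗ ν).real (Ioi x) = (μ.prod ν).real {p | x < p.1 + p.2} :=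
  map_measureReal_apply measurable_add measurableSet_Ioi

section ConvolutionTail

variable (μ : Measure ℝ) [IsProbabilityMeasure μ]

lemma two_mul_measureReal_Ioi_sub_sq_le_conv (h0 : μ (Iio 0) = 0) (x : ℝ) :
    2 * μ.real (Ioi x) - μ.real (Ioi x) ^ 2 ≤ (μ ∗ μ).real (Ioi x) := by
  have hIci : μ.real (Ici 0) = 1 := by
    rw [← compl_Iio, probReal_compl_eq_one_sub measurableSet_Iio, measureReal_def, h0,
      ENNReal.toReal_zero, sub_zero]
  have hunion : (μ.prod μ).real (Ioi x ×ˢ Ici 0 ∪ Ici 0 ×ˢ Ioi x) ≤ (μ ∗ μ).real (Ioi x) := by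
    rw [measureReal_conv_Ioi]
    refine measureReal_mono ?_
    rintro ⟨a, b⟩ (⟨ha, hb⟩ | ⟨ha, hb⟩) <;> simp only [mem_Ioi, mem_Ici] at ha hb <;>
      simp only [mem_ofPred_eq] <;> linarith
  have hinter : (μ.prod μ).real (Ioi x ×ˢ Ici 0 ∩ Ici 0 ×ˢ Ioi x) ≤ μ.real (Ioi x) ^ 2 := by
    rw [sq, ← measureReal_prod_prod]
    exact measureReal_mono fun p hp => ⟨hp.1.1, hp.2.2⟩
  have := measureReal_union_add_inter (μ := μ.prod μ) (s := Ioi x ×ˢ Ici 0)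
    (t := Ici 0 ×ˢ Ioi x) (measurableSet_Ici.prod measurableSet_Ioi)
  simp only [measureReal_prod_prod, hIci, mul_one, one_mul] at this
  linarith

-- If `a + b > x` with `a, b > A`, then `a > x / 2` or `b > x - a ≥ x / 2`.
lemma conv_measureReal_Ioi_le (x A : ℝ) :
    (μ ∗ μ).real (Ioi x) ≤
      2 * μ.real (Ioi (x - A)) + 2 * (μ.real (Ioi A) * μ.real (Ioi (x / 2))) := by
  have hcover : {p : ℝ × ℝ | x < p.1 + p.2} ⊆
      ((univ ×ˢ Ioi (x - A) ∪ Ioi (x - A) ×ˢ univ) ∪ Ioi A ×ˢ Ioi (x / 2)) ∪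
        Ioi (x / 2) ×ˢ Ioi A := by
    rintro ⟨a, b⟩ hab
    simp only [mem_ofPred_eq] at hab
    simp only [mem_union, mem_prod, mem_univ, mem_Ioi, true_and, and_true]
    by_contra! h
    have hA : A < a := by linarith [h.1.1.1]
    rcases le_or_gt a (x / 2) with ha | ha
    · linarith [h.1.2 hA]
    · linarith [h.2 ha, h.1.1.2]
  calc (μ ∗ μ).real (Ioi x)
      ≤ (μ.prod μ).real (((univ ×ˢ Ioi (x - A) ∪ Ioi (x - A) ×ˢ univ) ∪
          Ioi A ×ˢ Ioi (x / 2)) ∪ Ioi (x / 2) ×ˢ Ioi A) :=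
        (measureReal_conv_Ioi μ μ x).trans_le (measureReal_mono hcover)
    _ ≤ (μ.prod μ).real (univ ×ˢ Ioi (x - A)) + (μ.prod μ).real (Ioi (x - A) ×ˢ univ) +
          (μ.prod μ).real (Ioi A ×ˢ Ioi (x / 2)) + (μ.prod μ).real (Ioi (x / 2) ×ˢ Ioi A) := by
      grw [measureReal_union_le, measureReal_union_le, measureReal_union_le]
    _ = _ := by simp only [measureReal_prod_prod, probReal_univ]; ring

end ConvolutionTail

section UniformTails

variable {ι : Type*} (μ : ι → Measure ℝ)

-- Only the upper half of `T(x - A) / T(x) → 1`; the lower half is automatic for `A ≥ 0`.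
def IsUniformlyLongTailed : Prop :=
  ∀ A, ∀ δ > 0, ∀ᶠ x in atTop, ∀ i, (μ i).real (Ioi (x - A)) ≤ (1 + δ) * (μ i).real (Ioi x)

def HasUniformlyDominatedVariation : Prop :=
  ∃ D > 0, ∀ᶠ x in atTop, ∀ i, (μ i).real (Ioi (x / 2)) ≤ D * (μ i).real (Ioi x)

theorem tendstoUniformly_conv_div_of_isUniformlyLongTailed [∀ i, IsProbabilityMeasure (μ i)]
    (h0 : ∀ i, μ i (Iio 0) = 0) (hpos : ∀ᶠ x in atTop, ∀ i, 0 < (μ i).real (Ioi x))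
    (hsmall : ∀ η > 0, ∀ᶠ x in atTop, ∀ i, (μ i).real (Ioi x) < η)
    (hlong : IsUniformlyLongTailed μ) (hdom : HasUniformlyDominatedVariation μ) :
    TendstoUniformly (fun x i => (μ i ∗ μ i).real (Ioi x) / (μ i).real (Ioi x))
      (fun _ => 2) atTop := by
  rw [Metric.tendstoUniformly_iff]
  intro ε hε
  obtain ⟨D, hD, hdom⟩ := hdom
  obtain ⟨A, hA⟩ := (hsmall (ε / (8 * D)) (by positivity)).exists
  filter_upwards [hpos, hsmall (ε / 2) (by positivity), hdom, hlong A (ε / 8) (by positivity)]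
    with x hpos hsmall hdom hlong i
  have hlower := two_mul_measureReal_Ioi_sub_sq_le_conv (μ i) (h0 i) x
  have hupper := conv_measureReal_Ioi_le (μ i) x A
  have hcross : (μ i).real (Ioi A) * (μ i).real (Ioi (x / 2)) ≤ ε / 8 * (μ i).real (Ioi x) :=
    calc _ ≤ ε / (8 * D) * (D * (μ i).real (Ioi x)) :=
          mul_le_mul (hA i).le (hdom i) measureReal_nonneg (by positivity)
      _ = _ := by field_simp
  rw [Real.dist_eq, abs_sub_comm, abs_sub_lt_iff, sub_lt_iff_lt_add', sub_lt_comm,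
    div_lt_iff₀ (hpos i), lt_div_iff₀ (hpos i)]
  constructor <;> nlinarith [hpos i, hsmall i, hlong i]

end UniformTails

section LogPeriodic

variable {M : ℝ → ℝ} {q : ℝ}

lemma uniformContinuous_comp_exp_of_logPeriodic (hq : 1 < q)
    (hcont : ∀ x > 0, ContinuousAt M x) (hper : ∀ x > 0, M (q * x) = M x) :
    UniformContinuous fun t => M (exp t) := by
  refine Function.Periodic.uniformContinuous_of_continuous (log_pos hq) (fun t => ?_)
    (continuous_iff_continuousAt.2 fun t => (hcont _ (exp_pos t)).comp
      continuous_exp.continuousAt)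
  rw [exp_add, exp_log (by linarith), mul_comm, hper _ (exp_pos t)]

lemma eventually_rpow_mul_le_of_logPeriodic (α : ℝ) (hq : 1 < q)
    (hcont : ∀ x > 0, ContinuousAt M x) (hper : ∀ x > 0, M (q * x) = M x)
    {m : ℝ} (hm0 : 0 < m) (hm : ∀ x > 0, m ≤ M x) (A : ℝ) {δ : ℝ} (hδ : 0 < δ) :
    ∀ᶠ x in atTop, ∀ u > 0, ((x - A) / x) ^ (-α) * M ((x - A) / x * u) ≤ (1 + δ) * M u := by
  obtain ⟨a, ha, haδ, ha1⟩ : ∃ a > 0, 3 * a ≤ δ ∧ a ≤ 1 :=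
    ⟨min δ 1 / 3, by positivity, by linarith [min_le_left δ 1], by linarith [min_le_right δ 1]⟩
  have hsq : (1 + a) * (1 + a) ≤ 1 + δ := by nlinarith
  obtain ⟨η, hη, hMη⟩ := Metric.uniformContinuous_iff.1
    (uniformContinuous_comp_exp_of_logPeriodic hq hcont hper) (a * m) (by positivity)
  have hs : Tendsto (fun x => (x - A) / x) atTop (𝓝 1) := by
    have : Tendsto (fun x => 1 - A / x) atTop (𝓝 (1 - 0)) :=
      tendsto_const_nhds.sub (tendsto_const_nhds.div_atTop tendsto_id)
    rw [sub_zero] at this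
    refine this.congr' ((eventually_ne_atTop 0).mono fun x hx => ?_)
    field_simp
  have hlog : Tendsto (fun x => log ((x - A) / x)) atTop (𝓝 0) := by
    simpa using hs.log one_ne_zero
  have hpow : Tendsto (fun x => ((x - A) / x) ^ (-α)) atTop (𝓝 1) := by
    simpa using hs.rpow_const (Or.inl one_ne_zero)
  filter_upwards [hs.eventually (lt_mem_nhds one_pos),
    hlog.eventually (Metric.ball_mem_nhds 0 hη),
    hpow.eventually (ge_mem_nhds (lt_add_of_pos_right 1 ha))]
    with x hs0 hslog hspow u hu
  have hMs : M ((x - A) / x * u) ≤ (1 + a) * M u := by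
    have h := hMη (a := log ((x - A) / x) + log u) (b := log u) (by simpa using hslog)
    rw [← log_mul hs0.ne' hu.ne', exp_log (mul_pos hs0 hu), exp_log hu, Real.dist_eq] at h
    nlinarith [(abs_lt.1 h).2, hm u hu]
  calc ((x - A) / x) ^ (-α) * M ((x - A) / x * u) ≤ (1 + a) * ((1 + a) * M u) :=
        mul_le_mul hspow hMs (by linarith [hm _ (mul_pos hs0 hu)]) (by positivity)
    _ ≤ (1 + δ) * M u := by nlinarith [hm u hu]

end LogPeriodic

section ParetoTail

variable {α : ℝ} {M : ℝ → ℝ} {m K L : ℝ} {μ : Measure ℝ}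

lemma apply_div_apply_le_div (hm0 : 0 < m) (hm : ∀ x > 0, m ≤ M x) (hK : ∀ x > 0, M x ≤ K)
    {u v : ℝ} (hu : 0 < u) (hv : 0 < v) : M u / M v ≤ K / m :=
  div_le_div₀ (hm0.le.trans ((hm 1 one_pos).trans (hK 1 one_pos))) (hK u hu) hm0 (hm v hv)

lemma measureReal_Ioi_pos (hm0 : 0 < m) (hm : ∀ x > 0, m ≤ M x) (hL : 0 < L)
    (hT : ∀ y ≥ 1, μ.real (Ioi y) = y ^ (-α) * M (y * L) / M L) {x : ℝ} (hx : 1 ≤ x) :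
    0 < μ.real (Ioi x) := by
  have hML : 0 < M (x * L) := hm0.trans_le (hm _ (by positivity))
  have hL' : 0 < M L := hm0.trans_le (hm _ hL)
  rw [hT x hx]
  positivity

lemma measureReal_Ioi_mul_eq (hm0 : 0 < m) (hm : ∀ x > 0, m ≤ M x) (hL : 0 < L)
    (hT : ∀ y ≥ 1, μ.real (Ioi y) = y ^ (-α) * M (y * L) / M L)
    {s x : ℝ} (hs : 0 < s) (hx : 1 ≤ x) (hsx : 1 ≤ s * x) :
    μ.real (Ioi (s * x)) = s ^ (-α) * (M (s * (x * L)) / M (x * L)) * μ.real (Ioi x) := by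
  have hML : 0 < M (x * L) := hm0.trans_le (hm _ (by positivity))
  rw [hT _ hsx, hT _ hx, mul_rpow hs.le (by linarith), mul_assoc s]
  field_simp

lemma measureReal_Ioi_le (hm0 : 0 < m) (hm : ∀ x > 0, m ≤ M x) (hK : ∀ x > 0, M x ≤ K)
    (hL : 0 < L) (hT : ∀ y ≥ 1, μ.real (Ioi y) = y ^ (-α) * M (y * L) / M L)
    {x : ℝ} (hx : 1 ≤ x) : μ.real (Ioi x) ≤ K / m * x ^ (-α) := by
  rw [hT x hx, mul_comm (K / m), mul_div_assoc]
  exact mul_le_mul_of_nonneg_left (apply_div_apply_le_div hm0 hm hK (by positivity) hL)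
    (by positivity)

lemma measureReal_Ioi_half_le (hm0 : 0 < m) (hm : ∀ x > 0, m ≤ M x) (hK : ∀ x > 0, M x ≤ K)
    (hL : 0 < L) (hT : ∀ y ≥ 1, μ.real (Ioi y) = y ^ (-α) * M (y * L) / M L)
    {x : ℝ} (hx : 2 ≤ x) : μ.real (Ioi (x / 2)) ≤ 2 ^ α * (K / m) * μ.real (Ioi x) := by
  rw [show x / 2 = 2⁻¹ * x by ring,
    measureReal_Ioi_mul_eq hm0 hm hL hT (by norm_num) (by linarith) (by linarith),
    inv_rpow zero_le_two, rpow_neg zero_le_two, inv_inv]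
  exact mul_le_mul_of_nonneg_right (mul_le_mul_of_nonneg_left
    (apply_div_apply_le_div hm0 hm hK (by positivity) (by positivity)) (by positivity))
    measureReal_nonneg

lemma measureReal_Ioi_sub_le (hm0 : 0 < m) (hm : ∀ x > 0, m ≤ M x) (hL : 0 < L)
    (hT : ∀ y ≥ 1, μ.real (Ioi y) = y ^ (-α) * M (y * L) / M L) {x A δ : ℝ}
    (hx : 1 ≤ x) (hxA : A + 1 ≤ x)
    (hM : ∀ u > 0, ((x - A) / x) ^ (-α) * M ((x - A) / x * u) ≤ (1 + δ) * M u) :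
    μ.real (Ioi (x - A)) ≤ (1 + δ) * μ.real (Ioi x) := by
  have hs : 0 < (x - A) / x := div_pos (by linarith) (by linarith)
  have hML : 0 < M (x * L) := hm0.trans_le (hm _ (by positivity))
  rw [← div_mul_cancel₀ (x - A) (by linarith : x ≠ 0),
    measureReal_Ioi_mul_eq hm0 hm hL hT hs hx (by field_simp; linarith),
    ← mul_div_assoc]
  exact mul_le_mul_of_nonneg_right ((div_le_iff₀ hML).2 (hM _ (by positivity)))
    measureReal_nonneg

end ParetoTail

theorem tendstoUniformly_conv_div_of_paretoTail {ι : Type*} {α q m K : ℝ} {M : ℝ → ℝ}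
    (hα : 0 < α) (hq : 1 < q) (hcont : ∀ x > 0, ContinuousAt M x)
    (hper : ∀ x > 0, M (q * x) = M x) (hm0 : 0 < m) (hm : ∀ x > 0, m ≤ M x)
    (hK : ∀ x > 0, M x ≤ K) (μ : ι → Measure ℝ) [∀ i, IsProbabilityMeasure (μ i)]
    (L : ι → ℝ) (hL : ∀ i, 0 < L i) (h0 : ∀ i, μ i (Iio 0) = 0)
    (hdf : ∀ i, ∀ x ≥ 1, (μ i).real (Iic x) = 1 - x ^ (-α) * M (x * L i) / M (L i)) :
    TendstoUniformly (fun x i => (μ i ∗ μ i).real (Ioi x) / (μ i).real (Ioi x))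
      (fun _ => 2) atTop := by
  have hT : ∀ i, ∀ y ≥ 1, (μ i).real (Ioi y) = y ^ (-α) * M (y * L i) / M (L i) :=
    fun i y hy => by
      rw [← compl_Iic, probReal_compl_eq_one_sub measurableSet_Iic, hdf i y hy, sub_sub_cancel]
  refine tendstoUniformly_conv_div_of_isUniformlyLongTailed μ h0 ?_ ?_ ?_ ?_
  · filter_upwards [eventually_ge_atTop 1] with x hx i
    exact measureReal_Ioi_pos hm0 hm (hL i) (hT i) hx
  · intro η hη
    have hdecay : Tendsto (fun x => K / m * x ^ (-α)) atTop (𝓝 0) := by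
      simpa using (tendsto_rpow_neg_atTop hα).const_mul (K / m)
    filter_upwards [hdecay.eventually (gt_mem_nhds hη), eventually_ge_atTop 1] with x hxη hx i
    exact (measureReal_Ioi_le hm0 hm hK (hL i) (hT i) hx).trans_lt hxη
  · intro A δ hδ
    filter_upwards [eventually_rpow_mul_le_of_logPeriodic α hq hcont hper hm0 hm A hδ,
      eventually_ge_atTop 1, eventually_ge_atTop (A + 1)] with x hM hx hxA i
    exact measureReal_Ioi_sub_le hm0 hm (hL i) (hT i) hx hxA hM
  · have hK0 : 0 < K := hm0.trans_le ((hm 1 one_pos).trans (hK 1 one_pos))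
    refine ⟨2 ^ α * (K / m), by positivity, ?_⟩
    filter_upwards [eventually_ge_atTop 2] with x hx i
    exact measureReal_Ioi_half_le hm0 hm hK (hL i) (hT i) hx

theorem stmt_8_general (α c : ℝ) (hα0 : 0 < α) (hc : 1 < c)
    -- the continuous logarithmically periodic function M
    (M : ℝ → ℝ)
    (hMcont : ∀ x > (0 : ℝ), ContinuousAt M x)
    (hMbdd : ∃ K : ℝ, ∀ x > (0 : ℝ), M x ≤ K)
    (hMlow : ∃ m > (0 : ℝ), ∀ x > (0 : ℝ), m ≤ M x)
    (hMper : ∀ x > (0 : ℝ), M (c ^ (1 / α) * x) = M x)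
    -- the probability measures ν_lam on [1,∞)
    (ν : ℝ → Measure ℝ)
    (hνprob : ∀ lam ∈ Set.Icc c⁻¹ (1 : ℝ), IsProbabilityMeasure (ν lam))
    (hνsupp : ∀ lam ∈ Set.Icc c⁻¹ (1 : ℝ), ν lam (Set.Iio 1) = 0)
    (hνdf : ∀ lam ∈ Set.Icc c⁻¹ (1 : ℝ), ∀ x ≥ (1 : ℝ),
      (ν lam (Set.Iic x)).toReal = 1 - x ^ (-α) * M (x * lam ^ (1 / α)) / M (lam ^ (1 / α))) :
    ∀ ε > (0 : ℝ), ∃ X : ℝ, ∀ x ≥ X, ∀ lam ∈ Set.Icc c⁻¹ (1 : ℝ),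
      |((ν lam).conv (ν lam) (Set.Ioi x)).toReal / (ν lam (Set.Ioi x)).toReal - 2| < ε := by
  intro ε hε
  obtain ⟨K, hK⟩ := hMbdd
  obtain ⟨m, hm0, hm⟩ := hMlow
  have : ∀ lam : Icc c⁻¹ (1 : ℝ), IsProbabilityMeasure (ν lam) := fun lam => hνprob lam lam.2
  have hlam : ∀ lam : Icc c⁻¹ (1 : ℝ), 0 < (lam : ℝ) :=
    fun lam => (inv_pos.2 (zero_lt_one.trans hc)).trans_le lam.2.1
  have hunif := tendstoUniformly_conv_div_of_paretoTail hα0 (one_lt_rpow hc (by positivity))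
    hMcont hMper hm0 hm hK (fun lam : Icc c⁻¹ (1 : ℝ) => ν lam) (fun lam => (lam : ℝ) ^ (1 / α))
    (fun lam => rpow_pos_of_pos (hlam lam) _)
    (fun lam => measure_mono_null (Iio_subset_Iio zero_le_one) (hνsupp lam lam.2))
    (fun lam => hνdf lam lam.2)
  obtain ⟨X, hX⟩ := (Metric.tendstoUniformly_iff.1 hunif ε hε).exists_forall_of_atTop
  refine ⟨X, fun x hx lam hl => ?_⟩
  rw [← Real.dist_eq, dist_comm]
  exact hX x hx ⟨lam, hl⟩

/-- uniform subexponentiality. Let `ν_lam` be the probability measure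
on `[1,∞)` with distribution function `1 − x^{−α} M(x·lam^{1/α})/M(lam^{1/α})`. Then
`lim_{x→∞} sup_{lam∈[c⁻¹,1]} | (ν_lam ∗ ν_lam)((x,∞)) / ν_lam((x,∞)) − 2 | = 0`. -/
theorem stmt_8 (α c : ℝ) (hα0 : 0 < α) (hα1 : α < 1) (hc : 1 < c)
    -- the continuous logarithmically periodic function M
    (M : ℝ → ℝ)
    (hMcont : ∀ x > (0 : ℝ), ContinuousAt M x)
    (hMpos : ∀ x > (0 : ℝ), 0 < M x)
    (hMbdd : ∃ K : ℝ, ∀ x > (0 : ℝ), M x ≤ K)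
    (hMlow : ∃ m > (0 : ℝ), ∀ x > (0 : ℝ), m ≤ M x)
    (hMper : ∀ x > (0 : ℝ), M (c ^ (1 / α) * x) = M x)
    (hMmono : ∀ x y : ℝ, 0 < x → x ≤ y → M y * y ^ (-α) ≤ M x * x ^ (-α))
    -- the probability measures ν_lam on [1,∞)
    (ν : ℝ → Measure ℝ)
    (hνprob : ∀ lam ∈ Set.Icc c⁻¹ (1 : ℝ), IsProbabilityMeasure (ν lam))
    (hνsupp : ∀ lam ∈ Set.Icc c⁻¹ (1 : ℝ), ν lam (Set.Iio 1) = 0)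
    (hνdf : ∀ lam ∈ Set.Icc c⁻¹ (1 : ℝ), ∀ x ≥ (1 : ℝ),
      (ν lam (Set.Iic x)).toReal = 1 - x ^ (-α) * M (x * lam ^ (1 / α)) / M (lam ^ (1 / α))) :
    ∀ ε > (0 : ℝ), ∃ X : ℝ, ∀ x ≥ X, ∀ lam ∈ Set.Icc c⁻¹ (1 : ℝ),
      |((ν lam).conv (ν lam) (Set.Ioi x)).toReal / (ν lam (Set.Ioi x)).toReal - 2| < ε :=
  stmt_8_general α c hα0 hc M hMcont hMbdd hMlow hMper ν hνprob hνsupp hνdf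
end

section
/- Under these assumptions, for every real polynomial Q with zero constant term: ‖ Σ_{j=0}^∞ T_j · Q(e^{−sj}) − (s^α ℓ(1/s))^{−1} (∫_0^∞ Q(e^{−x}) dσ_s(x)) · P ‖ = o( (s^α ℓ(1/s))^{−1} ) as s → 0⁺, where σ_s denotes the Lebesgue–Stieltjes measure of the nondecreasing function x ↦ p(x/s) x^α. -/
/-!
Write `Q(e^{-x}) = ∑ aᵢ e^{-ix}` with `a₀ = 0`. Then `∑ⱼ Q(e^{-sj}) Tⱼ = ∑ aᵢ T̂(e^{-is})`, and
since `σ_s` is `s^α` times the push-forward of `σ_1` under `x ↦ s x`, the Laplace transform of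
`σ_1` gives `∫ e^{-ix} dσ_s = (i^α q₀(is))⁻¹`. So the claim splits into one statement for each
`i ≥ 1`, which is the hypothesis at the point `is`: the normalisations at `is` and at `s` differ
by the factor `ℓ(1/s)/ℓ(1/(is)) → 1`, and `q₀` is bounded away from zero.
-/

open Set Filter Topology Real MeasureTheory

section Normalization

variable {ι E : Type*} [SeminormedAddCommGroup E] [NormedSpace ℝ E] {l : Filter ι}

theorem norm_sub_inv_smul_mul_eq {t : ℝ} (ht : 0 < t) (x y : E) :
    ‖x - t⁻¹ • y‖ * t = ‖t • x - y‖ := by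
  rw [mul_comm, ← smul_inv_smul₀ ht.ne' y, ← smul_sub, norm_smul, Real.norm_of_nonneg ht.le,
    inv_smul_smul₀ ht.ne']

theorem tendsto_norm_sub_inv_smul_mul_iff {X Y : ι → E} {g : ι → ℝ} (hg : ∀ᶠ i in l, 0 < g i) :
    Tendsto (fun i => ‖X i - (g i)⁻¹ • Y i‖ * g i) l (𝓝 0) ↔
      Tendsto (fun i => g i • X i - Y i) l (𝓝 0) := by
  rw [tendsto_zero_iff_norm_tendsto_zero (f := fun i => g i • X i - Y i)]
  refine tendsto_congr' ?_
  filter_upwards [hg] with i hi using norm_sub_inv_smul_mul_eq hi _ _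

theorem tendsto_mul_smul_sub_of_tendsto_one {X : ι → E} {P : E} {g r : ι → ℝ}
    (hr : Tendsto r l (𝓝 1)) (hX : Tendsto (fun i => g i • X i - P) l (𝓝 0)) :
    Tendsto (fun i => (r i * g i) • X i - P) l (𝓝 0) := by
  have h := (hr.smul hX).add ((hr.sub_const 1).smul_const P)
  rw [one_smul, sub_self, zero_smul, add_zero] at h
  refine h.congr fun i => ?_
  rw [smul_sub, sub_smul, one_smul, mul_smul]
  abel

end Normalization

theorem measure_Iic_eq_measure_Ioc_zero {μ : Measure ℝ} (h0 : μ (Iic 0) = 0) (b : ℝ) :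
    μ (Iic b) = μ (Ioc 0 b) :=
  le_antisymm
    ((measure_mono Iic_subset_Iic_union_Ioc).trans
      ((measure_union_le _ _).trans_eq (by rw [h0, zero_add])))
    (measure_mono Ioc_subset_Iic_self)

theorem MeasureTheory.Measure.ext_of_measure_Ioc_zero {μ ν : Measure ℝ} (hμ0 : μ (Iic 0) = 0)
    (hν0 : ν (Iic 0) = 0) (hfin : ∀ b > (0 : ℝ), μ (Ioc 0 b) ≠ ⊤)
    (h : ∀ b > (0 : ℝ), μ (Ioc 0 b) = ν (Ioc 0 b)) : μ = ν := by
  have hIic : ∀ b, μ (Iic b) = ν (Iic b) ∧ μ (Iic b) ≠ ⊤ := by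
    intro b
    rw [measure_Iic_eq_measure_Ioc_zero hμ0, measure_Iic_eq_measure_Ioc_zero hν0]
    rcases lt_or_ge 0 b with hb | hb
    · exact ⟨h b hb, hfin b hb⟩
    · simp [Ioc_eq_empty_of_le hb]
  refine Measure.ext_of_generateFrom_of_iUnion (range Iic) (fun n : ℕ => Iic (n : ℝ))
    (BorelSpace.measurable_eq.trans (borel_eq_generateFrom_Iic ℝ)) isPiSystem_Iic
    (iUnion_eq_univ_iff.2 fun x => ⟨⌈x⌉₊, Nat.le_ceil x⟩) (fun n => ⟨n, rfl⟩)
    (fun n => (hIic n).2) ?_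
  rintro _ ⟨b, rfl⟩
  exact (hIic b).1

theorem eq_smul_map_const_mul_of_measure_Ioc {μ ν : Measure ℝ} {F : ℝ → ℝ} {c s : ℝ}
    (hc : 0 ≤ c) (hs : 0 < s) (hμ0 : μ (Iic 0) = 0)
    (hμ : ∀ b > (0 : ℝ), μ (Ioc 0 b) = ENNReal.ofReal (F b)) (hν0 : ν (Iic 0) = 0)
    (hν : ∀ b > (0 : ℝ), ν (Ioc 0 b) = ENNReal.ofReal (c * F (b / s))) :
    ν = ENNReal.ofReal c • μ.map (s * ·) := by
  have hmap : ∀ I : Set ℝ, MeasurableSet I →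
      (ENNReal.ofReal c • μ.map (s * ·)) I = ENNReal.ofReal c * μ ((s * ·) ⁻¹' I) := fun I hI => by
    rw [Measure.smul_apply, Measure.map_apply (measurable_const_mul s) hI, smul_eq_mul]
  refine Measure.ext_of_measure_Ioc_zero hν0 ?_ (fun b hb => hν b hb ▸ ENNReal.ofReal_ne_top)
    fun b hb => ?_
  · rw [hmap _ measurableSet_Iic, preimage_const_mul_Iic₀ _ hs, zero_div, hμ0, mul_zero]
  · rw [hν b hb, hmap _ measurableSet_Ioc, preimage_const_mul_Ioc₀ _ _ hs, zero_div,
      hμ _ (div_pos hb hs), ENNReal.ofReal_mul hc]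

section LaplaceTransform

variable {μ : Measure ℝ} {α s k : ℝ} {q : ℝ → ℝ}

theorem integrable_exp_neg_mul_smul_map (hq : ∀ t > (0 : ℝ), 0 < q t)
    (hμ : ∀ t > (0 : ℝ), t ^ α * ∫ x, exp (-t * x) ∂μ = 1 / q t) (hs : 0 < s) (hk : 0 < k) :
    Integrable (fun x => exp (-k * x)) (ENNReal.ofReal (s ^ α) • μ.map (s * ·)) := by
  have hint : Integrable (fun y => exp (-(k * s) * y)) μ := by
    refine .of_integral_ne_zero (right_ne_zero_of_mul (a := (k * s) ^ α) ?_)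
    rw [hμ _ (mul_pos hk hs), one_div]
    exact (inv_pos.2 (hq _ (mul_pos hk hs))).ne'
  refine Integrable.smul_measure ?_ ENNReal.ofReal_ne_top
  rw [integrable_map_measure (by fun_prop) (by fun_prop)]
  simpa [Function.comp_def, mul_assoc, mul_left_comm] using hint

theorem integral_exp_neg_mul_smul_map (hμ : ∀ t > (0 : ℝ), t ^ α * ∫ x, exp (-t * x) ∂μ = 1 / q t)
    (hs : 0 < s) (hk : 0 < k) :
    ∫ x, exp (-k * x) ∂(ENNReal.ofReal (s ^ α) • μ.map (s * ·)) = (k ^ α * q (k * s))⁻¹ := by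
  have hks := hμ _ (mul_pos hk hs)
  rw [mul_rpow hk.le hs.le] at hks
  rw [integral_smul_measure, integral_map (by fun_prop) (by fun_prop),
    ENNReal.toReal_ofReal (by positivity), smul_eq_mul]
  simp only [← mul_assoc, neg_mul] at hks ⊢
  rw [mul_inv, ← one_div (q _), ← hks, mul_assoc, inv_mul_cancel_left₀ (by positivity)]

end LaplaceTransform

section ExponentialPolynomial

open Polynomial

theorem Polynomial.eval_exp_neg (Q : ℝ[X]) (t : ℝ) :
    Q.eval (exp (-t)) = ∑ i ∈ Q.support, Q.coeff i * exp (-(i * t)) := by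
  rw [eval_eq_sum, Polynomial.sum_def]
  refine Finset.sum_congr rfl fun i _ => ?_
  rw [← mul_neg, exp_nat_mul]

theorem Polynomial.pos_of_mem_support {R : Type*} [Semiring R] {Q : R[X]} (hQ0 : Q.coeff 0 = 0)
    {i : ℕ} (hi : i ∈ Q.support) : 0 < i :=
  Nat.pos_of_ne_zero fun h => mem_support_iff.1 hi (h ▸ hQ0)

theorem hasSum_eval_exp_neg_mul_smul {E : Type*} [AddCommMonoid E] [Module ℝ E]
    [TopologicalSpace E] [ContinuousAdd E] [ContinuousConstSMul ℝ E] {T : ℕ → E} {L : ℝ → E}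
    (hL : ∀ t > (0 : ℝ), HasSum (fun n : ℕ => exp (-t * n) • T n) (L t)) {Q : ℝ[X]}
    (hQ0 : Q.coeff 0 = 0) {s : ℝ} (hs : 0 < s) :
    HasSum (fun n : ℕ => Q.eval (exp (-s * n)) • T n) (∑ i ∈ Q.support, Q.coeff i • L (i * s)) := by
  have hterm : ∀ n : ℕ, Q.eval (exp (-s * n)) • T n
      = ∑ i ∈ Q.support, Q.coeff i • (exp (-(i * s) * n) • T n) := fun n => by
    rw [neg_mul, Q.eval_exp_neg, Finset.sum_smul]
    refine Finset.sum_congr rfl fun i _ => ?_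
    rw [mul_smul, neg_mul, mul_assoc]
  simp only [hterm]
  exact hasSum_sum fun i hi =>
    (hL _ (mul_pos (Nat.cast_pos.2 (pos_of_mem_support hQ0 hi)) hs)).const_smul _

theorem integral_eval_exp_neg {μ : Measure ℝ} {Q : ℝ[X]} (hQ0 : Q.coeff 0 = 0)
    (hint : ∀ k : ℕ, 0 < k → Integrable (fun x => exp (-k * x)) μ) :
    ∫ x, Q.eval (exp (-x)) ∂μ = ∑ i ∈ Q.support, Q.coeff i * ∫ x, exp (-i * x) ∂μ := by
  simp only [Q.eval_exp_neg, ← neg_mul]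
  rw [integral_finsetSum _ fun i hi => (hint i (pos_of_mem_support hQ0 hi)).const_mul _]
  simp only [integral_const_mul]

end ExponentialPolynomial

section SlowVariation

variable {ℓ : ℝ → ℝ} {k : ℝ}

theorem tendsto_const_mul_nhdsGT_zero (hk : 0 < k) : Tendsto (k * ·) (𝓝[>] 0) (𝓝[>] 0) :=
  tendsto_iff_comap.mpr (comap_mulLeft_nhdsGT_zero hk).ge

theorem tendsto_div_comp_inv_const_mul
    (hℓ : ∀ t > (0 : ℝ), Tendsto (fun x => ℓ (t * x) / ℓ x) atTop (𝓝 1)) (hk : 0 < k) :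
    Tendsto (fun s => ℓ (1 / s) / ℓ (1 / (k * s))) (𝓝[>] 0) (𝓝 1) := by
  refine ((hℓ k hk).comp (tendsto_inv_nhdsGT_zero.comp (tendsto_const_mul_nhdsGT_zero hk))).congr
    fun s => ?_
  simp only [Function.comp_apply, one_div, mul_inv, mul_inv_cancel_left₀ hk.ne']

theorem tendsto_rescaled_smul_sub {E : Type*} [SeminormedAddCommGroup E] [NormedSpace ℝ E]
    {α m : ℝ} {q : ℝ → ℝ} {L : ℝ → E} {P : E} (hℓpos : ∀ x > (0 : ℝ), 0 < ℓ x)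
    (hℓ : ∀ t > (0 : ℝ), Tendsto (fun x => ℓ (t * x) / ℓ x) atTop (𝓝 1)) (hm : 0 < m)
    (hq : ∀ t > (0 : ℝ), m ≤ q t)
    (hL : Tendsto (fun t => (t ^ α * ℓ (1 / t) * q t) • L t - P) (𝓝[>] 0) (𝓝 0)) (hk : 0 < k) :
    Tendsto (fun s => (s ^ α * ℓ (1 / s)) • L (k * s) - (k ^ α * q (k * s))⁻¹ • P)
      (𝓝[>] 0) (𝓝 0) := by
  have hrescaled := tendsto_mul_smul_sub_of_tendsto_one (tendsto_div_comp_inv_const_mul hℓ hk)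
    (hL.comp (tendsto_const_mul_nhdsGT_zero hk))
  have hbdd : IsBoundedUnder (· ≤ ·) (𝓝[>] 0) (norm ∘ fun s => (k ^ α * q (k * s))⁻¹) := by
    refine isBoundedUnder_of_eventually_le (a := (k ^ α * m)⁻¹) ?_
    filter_upwards [self_mem_nhdsWithin] with s hs
    have hqks := hq _ (mul_pos hk hs)
    have hqpos := hm.trans_le hqks
    rw [Function.comp_apply, norm_inv, Real.norm_of_nonneg (by positivity)]
    exact inv_anti₀ (by positivity) (by gcongr)
  refine (hbdd.smul_tendsto_zero hrescaled).congr' ?_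
  -- the normalisation at `ks` times `ℓ(1/s)/ℓ(1/(ks))` is `s^α ℓ(1/s) · k^α q(ks)`
  filter_upwards [self_mem_nhdsWithin] with s hs
  have hqks := hm.trans_le (hq _ (mul_pos hk hs))
  have hℓks := hℓpos _ (one_div_pos.2 (mul_pos hk hs))
  rw [smul_sub, smul_smul, mul_rpow hk.le hs.le]
  congr 2
  field_simp

end SlowVariation

theorem stmt_11_general (α : ℝ)
    -- a Banach lattice B and uniformly bounded positive operators T_n
    (B : Type*) [NormedAddCommGroup B] [NormedSpace ℝ B]
    (T : ℕ → B →L[ℝ] B)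
    -- T̂(e^{−s}) = Σ_n e^{−sn} T_n, convergent in operator norm
    (That : ℝ → B →L[ℝ] B)
    (hThat : ∀ s > (0 : ℝ), HasSum (fun n : ℕ => Real.exp (-s * n) • T n) (That s))
    -- a bounded operator P
    (P : B →L[ℝ] B)
    -- a slowly varying function ℓ
    (ℓ : ℝ → ℝ)
    (hℓpos : ∀ x > (0 : ℝ), 0 < ℓ x)
    (hℓsv : ∀ t > (0 : ℝ),
      Filter.Tendsto (fun x : ℝ => ℓ (t * x) / ℓ x) Filter.atTop (nhds 1))
    -- q₀ : bounded, bounded away from zero, log-periodic, with s ↦ s^{−α} q₀(s)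
    -- completely monotone
    (q₀ : ℝ → ℝ)
    (hq₀low : ∃ m > (0 : ℝ), ∀ s > (0 : ℝ), m ≤ q₀ s)
    -- p : bounded, positive, log-periodic, x^α p(x) nondecreasing and right-continuous,
    -- with Laplace–Stieltjes transform s^α ∫ e^{−sx} d(p(x)x^α) = 1/q₀(s)
    (p : ℝ → ℝ)
    (σp : Measure ℝ)
    (hσp0 : σp (Set.Iic 0) = 0)
    (hσp0' : ∀ b > (0 : ℝ), σp (Set.Ioc 0 b) = ENNReal.ofReal (p b * b ^ α))
    (hpq : ∀ s > (0 : ℝ), s ^ α * ∫ x : ℝ, Real.exp (-s * x) ∂σp = 1 / q₀ s)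
    -- the main hypothesis: T̂(e^{−s}) ∼ (s^α ℓ(1/s) q₀(s))⁻¹ P as s → 0⁺
    (hmain : Filter.Tendsto
      (fun s : ℝ => ‖That s - (s ^ α * ℓ (1 / s) * q₀ s)⁻¹ • P‖ * (s ^ α * ℓ (1 / s) * q₀ s))
      (nhdsWithin 0 (Set.Ioi 0)) (nhds 0))
    -- the Lebesgue–Stieltjes measures σ_s of x ↦ p(x/s) x^α
    (σ : ℝ → Measure ℝ)
    (hσ0 : ∀ s > (0 : ℝ), σ s (Set.Iic 0) = 0)
    (hσ0' : ∀ s > (0 : ℝ), ∀ b > (0 : ℝ),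
      σ s (Set.Ioc 0 b) = ENNReal.ofReal (p (b / s) * b ^ α))
    : ∀ Q : Polynomial ℝ, Q.coeff 0 = 0 →
      Filter.Tendsto
        (fun s : ℝ =>
          ‖(∑' j : ℕ, Q.eval (Real.exp (-s * j)) • T j)
              - ((s ^ α * ℓ (1 / s))⁻¹ * ∫ x : ℝ, Q.eval (Real.exp (-x)) ∂(σ s)) • P‖
            * (s ^ α * ℓ (1 / s)))
        (nhdsWithin 0 (Set.Ioi 0)) (nhds 0) := by
  intro Q hQ0
  obtain ⟨m, hm, hq₀m⟩ := hq₀low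
  have hq₀pos : ∀ t > (0 : ℝ), 0 < q₀ t := fun t ht => hm.trans_le (hq₀m t ht)
  have hF : ∀ s > (0 : ℝ), 0 < s ^ α * ℓ (1 / s) := fun s hs =>
    mul_pos (rpow_pos_of_pos hs α) (hℓpos _ (one_div_pos.2 hs))
  have hσ_eq (s : ℝ) (hs : 0 < s) : σ s = ENNReal.ofReal (s ^ α) • σp.map (s * ·) := by
    refine eq_smul_map_const_mul_of_measure_Ioc (rpow_nonneg hs.le α) hs hσp0 hσp0' (hσ0 s hs)
      fun b hb => ?_
    rw [hσ0' s hs b hb, div_rpow hb.le hs.le]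
    field_simp
  have hmain' : Tendsto (fun t => (t ^ α * ℓ (1 / t) * q₀ t) • That t - P) (𝓝[>] 0) (𝓝 0) :=
    (tendsto_norm_sub_inv_smul_mul_iff (eventually_nhdsWithin_of_forall fun t ht =>
      mul_pos (hF t ht) (hq₀pos t ht))).1 hmain
  have hterms := tendsto_finsetSum Q.support fun i hi =>
    (tendsto_rescaled_smul_sub hℓpos hℓsv hm hq₀m hmain'
      (Nat.cast_pos.2 (Q.pos_of_mem_support hQ0 hi))).const_smul (Q.coeff i)
  simp only [smul_zero, Finset.sum_const_zero] at hterms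
  have hscaled : Tendsto (fun s => (s ^ α * ℓ (1 / s)) • ∑' j : ℕ, Q.eval (exp (-s * j)) • T j
      - (∫ x, Q.eval (exp (-x)) ∂σ s) • P) (𝓝[>] 0) (𝓝 0) := by
    refine hterms.congr' ?_
    filter_upwards [self_mem_nhdsWithin] with s hs
    have hint (k : ℕ) (hk : 0 < k) : Integrable (fun x => exp (-k * x)) (σ s) :=
      hσ_eq s hs ▸ integrable_exp_neg_mul_smul_map hq₀pos hpq hs (Nat.cast_pos.2 hk)
    rw [(hasSum_eval_exp_neg_mul_smul hThat hQ0 hs).tsum_eq, integral_eval_exp_neg hQ0 hint,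
      Finset.smul_sum, Finset.sum_smul, ← Finset.sum_sub_distrib]
    refine Finset.sum_congr rfl fun i hi => ?_
    rw [hσ_eq s hs, integral_exp_neg_mul_smul_map hpq hs
      (Nat.cast_pos.2 (Q.pos_of_mem_support hQ0 hi)), smul_sub, smul_comm, mul_smul (Q.coeff i)]
  exact ((tendsto_norm_sub_inv_smul_mul_iff (eventually_nhdsWithin_of_forall hF)).2
    hscaled).congr fun s => by rw [mul_smul]

/-- Step 1 of the operator Karamata theorem. Under the stated
assumptions, for every real polynomial `Q` with zero constant term,
`‖Σ_j T_j Q(e^{−sj}) − (s^α ℓ(1/s))⁻¹ (∫ Q(e^{−x}) dσ_s(x)) P‖ = o((s^α ℓ(1/s))⁻¹)`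
as `s → 0⁺`, where `σ_s` is the Lebesgue–Stieltjes measure of `x ↦ p(x/s)x^α`. -/
theorem stmt_11 (α c : ℝ) (hα0 : 0 < α) (hα1 : α < 1) (hc : 1 < c)
    -- a Banach lattice B and uniformly bounded positive operators T_n
    (B : Type*) [NormedAddCommGroup B] [Lattice B] [HasSolidNorm B] [IsOrderedAddMonoid B] [NormedSpace ℝ B] [CompleteSpace B]
    (T : ℕ → B →L[ℝ] B)
    (hTpos : ∀ n : ℕ, ∀ v : B, 0 ≤ v → 0 ≤ T n v)
    (hTbdd : ∃ K : ℝ, ∀ n : ℕ, ‖T n‖ ≤ K)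
    -- T̂(e^{−s}) = Σ_n e^{−sn} T_n, convergent in operator norm
    (That : ℝ → B →L[ℝ] B)
    (hThat : ∀ s > (0 : ℝ), HasSum (fun n : ℕ => Real.exp (-s * n) • T n) (That s))
    -- a bounded operator P
    (P : B →L[ℝ] B)
    -- a slowly varying function ℓ
    (ℓ : ℝ → ℝ)
    (hℓpos : ∀ x > (0 : ℝ), 0 < ℓ x)
    (hℓsv : ∀ t > (0 : ℝ),
      Filter.Tendsto (fun x : ℝ => ℓ (t * x) / ℓ x) Filter.atTop (nhds 1))
    -- q₀ : bounded, bounded away from zero, log-periodic, with s ↦ s^{−α} q₀(s)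
    -- completely monotone
    (q₀ : ℝ → ℝ)
    (hq₀pos : ∀ s > (0 : ℝ), 0 < q₀ s)
    (hq₀bdd : ∃ K : ℝ, ∀ s > (0 : ℝ), q₀ s ≤ K)
    (hq₀low : ∃ m > (0 : ℝ), ∀ s > (0 : ℝ), m ≤ q₀ s)
    (hq₀per : ∀ s > (0 : ℝ), q₀ (c ^ (1 / α) * s) = q₀ s)
    (hq₀cm : ∀ n : ℕ, ∀ s > (0 : ℝ),
      0 ≤ (-1 : ℝ) ^ n * iteratedDeriv n (fun u : ℝ => u ^ (-α) * q₀ u) s)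
    -- p : bounded, positive, log-periodic, x^α p(x) nondecreasing and right-continuous,
    -- with Laplace–Stieltjes transform s^α ∫ e^{−sx} d(p(x)x^α) = 1/q₀(s)
    (p : ℝ → ℝ)
    (hppos : ∀ x > (0 : ℝ), 0 < p x)
    (hpbdd : ∃ K : ℝ, ∀ x > (0 : ℝ), p x ≤ K)
    (hpper : ∀ x > (0 : ℝ), p (c ^ (1 / α) * x) = p x)
    (hpmono : MonotoneOn (fun x : ℝ => x ^ α * p x) (Set.Ioi 0))
    (hprc : ∀ x > (0 : ℝ), ContinuousWithinAt (fun x : ℝ => x ^ α * p x) (Set.Ici x) x)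
    (σp : Measure ℝ)
    (hσp : ∀ a b : ℝ, 0 < a → a ≤ b →
      σp (Set.Ioc a b) = ENNReal.ofReal (p b * b ^ α - p a * a ^ α))
    (hσp0 : σp (Set.Iic 0) = 0)
    (hσp0' : ∀ b > (0 : ℝ), σp (Set.Ioc 0 b) = ENNReal.ofReal (p b * b ^ α))
    (hpq : ∀ s > (0 : ℝ), s ^ α * ∫ x : ℝ, Real.exp (-s * x) ∂σp = 1 / q₀ s)
    -- the main hypothesis: T̂(e^{−s}) ∼ (s^α ℓ(1/s) q₀(s))⁻¹ P as s → 0⁺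
    (hmain : Filter.Tendsto
      (fun s : ℝ => ‖That s - (s ^ α * ℓ (1 / s) * q₀ s)⁻¹ • P‖ * (s ^ α * ℓ (1 / s) * q₀ s))
      (nhdsWithin 0 (Set.Ioi 0)) (nhds 0))
    -- the Lebesgue–Stieltjes measures σ_s of x ↦ p(x/s) x^α
    (σ : ℝ → Measure ℝ)
    (hσ : ∀ s > (0 : ℝ), ∀ a b : ℝ, 0 < a → a ≤ b →
      σ s (Set.Ioc a b) = ENNReal.ofReal (p (b / s) * b ^ α - p (a / s) * a ^ α))
    (hσ0 : ∀ s > (0 : ℝ), σ s (Set.Iic 0) = 0)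
    (hσ0' : ∀ s > (0 : ℝ), ∀ b > (0 : ℝ),
      σ s (Set.Ioc 0 b) = ENNReal.ofReal (p (b / s) * b ^ α))
    : ∀ Q : Polynomial ℝ, Q.coeff 0 = 0 →
      Filter.Tendsto
        (fun s : ℝ =>
          ‖(∑' j : ℕ, Q.eval (Real.exp (-s * j)) • T j)
              - ((s ^ α * ℓ (1 / s))⁻¹ * ∫ x : ℝ, Q.eval (Real.exp (-x)) ∂(σ s)) • P‖
            * (s ^ α * ℓ (1 / s)))
        (nhdsWithin 0 (Set.Ioi 0)) (nhds 0) :=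
  stmt_11_general α B T That hThat P ℓ hℓpos hℓsv q₀ hq₀low p σp hσp0 hσp0' hpq hmain σ hσ0 hσ0'
end

section
/- For every ε > 0 and δ > 0 there exist real polynomials Q₁ and Q₂ with Q₁(x) ≤ g(x) ≤ Q₂(x) for all x ∈ [0,1], such that for every Borel measure μ on (0,∞) with ∫_0^∞ e^{−x} dμ(x) < ∞: ∫_0^∞ [Q₂(e^{−x}) − g(e^{−x})] dμ(x) ≤ ε ∫_0^∞ e^{−x} dμ(x) + μ((1−δ, 1+δ)) and ∫_0^∞ [g(e^{−x}) − Q₁(e^{−x})] dμ(x) ≤ ε ∫_0^∞ e^{−x} dμ(x) + μ((1−δ, 1+δ)). -/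
open Set Filter Topology Real MeasureTheory

/-- The indicator function of the interval `[e⁻¹, 1]`. -/
noncomputable def gInd : ℝ → ℝ := Set.indicator (Set.Icc (Real.exp (-1)) 1) (fun _ => 1)

/-!
Squeeze `g` between continuous ramps `u₁ ≤ g ≤ u₂` that differ from `g` only for `y = e^{-x}`
with `x` in `(1 - δ, 1 + δ)`, and vanish near `y = 0`. Writing `uᵢ y = y · fᵢ y` with `fᵢ`
continuous, a one-sided Weierstrass approximation `fᵢ ≤ p ≤ fᵢ + ε` yields polynomials
`Q = X · p` with `uᵢ ≤ Q ≤ uᵢ + ε y`. Hence `|Qᵢ(e^{-x}) - g(e^{-x})|` is pointwise at most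
`ε e^{-x}` plus the indicator of `(1 - δ, 1 + δ)`, and integrating against `μ` gives the bounds.
-/

lemma gInd_nonneg (y : ℝ) : 0 ≤ gInd y :=
  Set.indicator_nonneg (fun _ _ => zero_le_one) y

lemma gInd_le_one (y : ℝ) : gInd y ≤ 1 :=
  Set.indicator_le_self' (fun _ _ => zero_le_one) y

lemma gInd_of_lt {y : ℝ} (h : y < Real.exp (-1)) : gInd y = 0 :=
  Set.indicator_of_notMem (fun hm => absurd hm.1 (not_le.2 h)) _

lemma gInd_of_mem {y : ℝ} (h1 : Real.exp (-1) ≤ y) (h2 : y ≤ 1) : gInd y = 1 :=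
  Set.indicator_of_mem (Set.mem_Icc.mpr ⟨h1, h2⟩) _

noncomputable def ramp (s t y : ℝ) : ℝ := max 0 (min 1 ((y - s) / (t - s)))

section Ramp

variable {s t y : ℝ}

lemma continuous_ramp (s t : ℝ) : Continuous (ramp s t) := by
  unfold ramp
  fun_prop

lemma ramp_nonneg : 0 ≤ ramp s t y := le_max_left _ _

lemma ramp_le_one : ramp s t y ≤ 1 := max_le zero_le_one (min_le_left _ _)

lemma ramp_of_le (hst : s < t) (hy : y ≤ s) : ramp s t y = 0 :=
  max_eq_left <| (min_le_right _ _).trans <|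
    div_nonpos_of_nonpos_of_nonneg (sub_nonpos.2 hy) (sub_pos.2 hst).le

lemma ramp_of_ge (hst : s < t) (hy : t ≤ y) : ramp s t y = 1 := by
  have : 1 ≤ (y - s) / (t - s) := (one_le_div (sub_pos.2 hst)).2 (by linarith)
  simp only [ramp, min_eq_left this, max_eq_right zero_le_one]

end Ramp

lemma gInd_le_ramp {a y : ℝ} (ha : a < Real.exp (-1)) (hy : y ≤ 1) :
    gInd y ≤ ramp a (Real.exp (-1)) y := by
  rcases lt_or_ge y (Real.exp (-1)) with hlt | hge
  · rw [gInd_of_lt hlt]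
    exact ramp_nonneg
  · rw [gInd_of_mem hge hy, ramp_of_ge ha hge]

lemma ramp_le_gInd {c y : ℝ} (hc : Real.exp (-1) < c) (hy : y ≤ 1) :
    ramp (Real.exp (-1)) c y ≤ gInd y := by
  rcases le_or_gt y (Real.exp (-1)) with hle | hgt
  · rw [ramp_of_le hc hle]
    exact gInd_nonneg y
  · rw [gInd_of_mem hgt.le hy]
    exact ramp_le_one

lemma ramp_sub_gInd_exp_neg_le {δ x : ℝ} (hδ : 0 < δ) (hx : 0 < x) :
    ramp (Real.exp (-(1 + δ))) (Real.exp (-1)) (Real.exp (-x)) - gInd (Real.exp (-x))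
      ≤ (Ioo (1 - δ) (1 + δ)).indicator 1 x := by
  have hab : Real.exp (-(1 + δ)) < Real.exp (-1) := exp_lt_exp.2 (by linarith)
  have hy1 : Real.exp (-x) ≤ 1 := exp_le_one_iff.2 (by linarith)
  by_cases hxS : x ∈ Ioo (1 - δ) (1 + δ)
  · rw [indicator_of_mem hxS, Pi.one_apply]
    linarith [ramp_le_one (s := Real.exp (-(1 + δ))) (t := Real.exp (-1)) (y := Real.exp (-x)),
      gInd_nonneg (Real.exp (-x))]
  · rw [indicator_of_notMem hxS, sub_nonpos]
    rcases le_or_gt x 1 with hx1 | hx1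
    · have hb : Real.exp (-1) ≤ Real.exp (-x) := exp_le_exp.2 (by linarith)
      rw [ramp_of_ge hab hb, gInd_of_mem hb hy1]
    · have hxδ : 1 + δ ≤ x := by
        by_contra h
        exact hxS ⟨by linarith, by linarith⟩
      rw [ramp_of_le hab (exp_le_exp.2 (by linarith))]
      exact gInd_nonneg _

lemma gInd_sub_ramp_exp_neg_le {δ x : ℝ} (hδ : 0 < δ) (hx : 0 < x) :
    gInd (Real.exp (-x)) - ramp (Real.exp (-1)) (Real.exp (-(1 - δ))) (Real.exp (-x))
      ≤ (Ioo (1 - δ) (1 + δ)).indicator 1 x := by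
  have hbc : Real.exp (-1) < Real.exp (-(1 - δ)) := exp_lt_exp.2 (by linarith)
  have hy1 : Real.exp (-x) ≤ 1 := exp_le_one_iff.2 (by linarith)
  by_cases hxS : x ∈ Ioo (1 - δ) (1 + δ)
  · rw [indicator_of_mem hxS, Pi.one_apply]
    linarith [ramp_nonneg (s := Real.exp (-1)) (t := Real.exp (-(1 - δ))) (y := Real.exp (-x)),
      gInd_le_one (Real.exp (-x))]
  · rw [indicator_of_notMem hxS, sub_nonpos]
    rcases le_or_gt x 1 with hx1 | hx1
    · have hxδ : x ≤ 1 - δ := by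
        by_contra h
        exact hxS ⟨by linarith, by linarith⟩
      rw [ramp_of_ge hbc (exp_le_exp.2 (by linarith))]
      exact gInd_le_one _
    · rw [gInd_of_lt (exp_lt_exp.2 (by linarith))]
      exact ramp_nonneg

lemma exists_polynomial_le_le_add {f : ℝ → ℝ} {a b ε : ℝ} (hf : ContinuousOn f (Icc a b))
    (hε : 0 < ε) :
    ∃ p : Polynomial ℝ, ∀ y ∈ Icc a b, f y ≤ p.eval y ∧ p.eval y ≤ f y + ε := by
  obtain ⟨p, hp⟩ := exists_polynomial_near_of_continuousOn a b (fun y => f y + ε / 2)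
    (hf.add continuousOn_const) (ε / 2) (half_pos hε)
  refine ⟨p, fun y hy => ?_⟩
  have := abs_lt.1 (hp y hy)
  constructor <;> linarith [this.1, this.2]

/-- An error `ε * y` rather than `ε` is what survives integration against a measure `μ` that
is only known to integrate `e^{-x}`. -/
lemma exists_polynomial_le_le_add_mul_id {u : ℝ → ℝ} {a b ε : ℝ} (hu : Continuous u)
    (ha : 0 < a) (hu₀ : ∀ y ≤ a, u y = 0) (hε : 0 < ε) :
    ∃ Q : Polynomial ℝ, ∀ y ∈ Icc 0 b, u y ≤ Q.eval y ∧ Q.eval y ≤ u y + ε * y := by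
  have hmax : ∀ y, max y a ≠ 0 := fun y => (lt_max_of_lt_right ha).ne'
  have hfactor : ∀ y, u y = y * (u y / max y a) := by
    intro y
    rcases le_or_gt y a with hy | hy
    · simp [hu₀ y hy]
    · rw [max_eq_left hy.le, mul_div_cancel₀ _ (ha.trans hy).ne']
  have hf : Continuous fun y => u y / max y a :=
    hu.div (continuous_id.max continuous_const) hmax
  obtain ⟨p, hp⟩ := exists_polynomial_le_le_add (a := 0) (b := b) hf.continuousOn hε
  refine ⟨Polynomial.X * p, fun y hy => ?_⟩
  obtain ⟨hlo, hhi⟩ := hp y hy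
  rw [Polynomial.eval_mul, Polynomial.eval_X, hfactor y]
  constructor
  · exact mul_le_mul_of_nonneg_left hlo hy.1
  · nlinarith [mul_le_mul_of_nonneg_left hhi hy.1]

lemma lintegral_ofReal_le_of_ae_le {α : Type*} [MeasurableSpace α] {μ : Measure α}
    {h w : α → ℝ} {S : Set α} {ε : ℝ} (hS : MeasurableSet S) (hε : 0 ≤ ε)
    (hle : ∀ᵐ x ∂μ, h x ≤ ε * w x + S.indicator 1 x) :
    ∫⁻ x, ENNReal.ofReal (h x) ∂μ ≤ ENNReal.ofReal ε * ∫⁻ x, ENNReal.ofReal (w x) ∂μ + μ S := by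
  calc ∫⁻ x, ENNReal.ofReal (h x) ∂μ
      ≤ ∫⁻ x, ENNReal.ofReal ε * ENNReal.ofReal (w x) + S.indicator 1 x ∂μ := by
        refine lintegral_mono_ae ?_
        filter_upwards [hle] with x hx
        refine (ENNReal.ofReal_le_ofReal hx).trans (ENNReal.ofReal_add_le.trans ?_)
        rw [ENNReal.ofReal_mul hε]
        by_cases hxS : x ∈ S <;> simp [hxS]
    _ = ENNReal.ofReal ε * ∫⁻ x, ENNReal.ofReal (w x) ∂μ + μ S := by
        rw [lintegral_add_right _ (measurable_one.indicator hS),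
          lintegral_const_mul' _ _ ENNReal.ofReal_ne_top, lintegral_indicator_one hS]

/-- For every `ε > 0` and `δ > 0` there are polynomials `Q₁ ≤ g ≤ Q₂`
on `[0,1]` such that for every Borel measure `μ` on `(0,∞)` with `∫ e^{−x} dμ < ∞`,
`∫ [Q₂(e^{−x}) − g(e^{−x})] dμ ≤ ε ∫ e^{−x} dμ + μ((1−δ,1+δ))`, and similarly for `Q₁`. -/
theorem stmt_12 :
    ∀ ε > (0 : ℝ), ∀ δ > (0 : ℝ), ∃ Q₁ Q₂ : Polynomial ℝ,
      (∀ x ∈ Set.Icc (0 : ℝ) 1, Q₁.eval x ≤ gInd x ∧ gInd x ≤ Q₂.eval x) ∧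
      ∀ μ : Measure ℝ, μ (Set.Iic 0) = 0 →
        (∫⁻ x, ENNReal.ofReal (Real.exp (-x)) ∂μ) < ⊤ →
        ((∫⁻ x, ENNReal.ofReal (Q₂.eval (Real.exp (-x)) - gInd (Real.exp (-x))) ∂μ)
            ≤ ENNReal.ofReal ε * (∫⁻ x, ENNReal.ofReal (Real.exp (-x)) ∂μ)
              + μ (Set.Ioo (1 - δ) (1 + δ)) ∧
          (∫⁻ x, ENNReal.ofReal (gInd (Real.exp (-x)) - Q₁.eval (Real.exp (-x))) ∂μ)
            ≤ ENNReal.ofReal ε * (∫⁻ x, ENNReal.ofReal (Real.exp (-x)) ∂μ)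
              + μ (Set.Ioo (1 - δ) (1 + δ))) := by
  intro ε hε δ hδ
  have hab : Real.exp (-(1 + δ)) < Real.exp (-1) := exp_lt_exp.2 (by linarith)
  have hbc : Real.exp (-1) < Real.exp (-(1 - δ)) := exp_lt_exp.2 (by linarith)
  obtain ⟨Q₂, hQ₂⟩ := exists_polynomial_le_le_add_mul_id (b := 1) (continuous_ramp _ _)
    (exp_pos _) (fun y hy => ramp_of_le hab hy) hε
  obtain ⟨P, hP⟩ := exists_polynomial_le_le_add_mul_id (b := 1) (continuous_ramp _ _)
    (exp_pos _) (fun y hy => ramp_of_le hbc hy) hε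
  refine ⟨P - Polynomial.C ε * Polynomial.X, Q₂, fun y hy => ?_, fun μ hμ _ => ?_⟩
  · simp only [Polynomial.eval_sub, Polynomial.eval_mul, Polynomial.eval_C, Polynomial.eval_X]
    constructor
    · linarith [(hP y hy).2, ramp_le_gInd (y := y) hbc hy.2]
    · linarith [(hQ₂ y hy).1, gInd_le_ramp (y := y) hab hy.2]
  have hpos : ∀ᵐ x ∂μ, 0 < x := by
    filter_upwards [measure_eq_zero_iff_ae_notMem.1 hμ] with x hx
    exact not_le.1 hx
  have hexp : ∀ x, 0 < x → Real.exp (-x) ∈ Icc (0 : ℝ) 1 := fun x hx =>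
    ⟨(exp_pos _).le, exp_le_one_iff.2 (by linarith)⟩
  constructor <;> refine lintegral_ofReal_le_of_ae_le measurableSet_Ioo hε.le ?_ <;>
    filter_upwards [hpos] with x hx
  · linarith [(hQ₂ _ (hexp x hx)).2, ramp_sub_gInd_exp_neg_le hδ hx]
  · simp only [Polynomial.eval_sub, Polynomial.eval_mul, Polynomial.eval_C, Polynomial.eval_X]
    linarith [(hP _ (hexp x hx)).1, gInd_sub_ramp_exp_neg_le hδ hx]
end

section
/- If 2ε(1 + 2π/log c) < 1, then the function x ↦ (1/2) x^{−α} (1 + 2ε sin((2πα/log c) log x)) is strictly decreasing on (0,∞). In particular, the sequence ξ_n = (1/2) n^{−α}(1 + 2ε sin((2πα/log c) log n)), n ≥ 1, is strictly decreasing. -/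
open Set Filter Topology Real

/-- If `2ε(1 + 2π/log c) < 1`, the function
`x ↦ (1/2) x^(−α) (1 + 2ε sin((2πα/log c) log x))` is strictly decreasing on `(0,∞)`;
in particular the sequence `ξ_n`, `n ≥ 1`, is strictly decreasing. -/
theorem stmt_14 (α c ε : ℝ) (hα0 : 0 < α) (hα1 : α < 1) (hc : 1 < c) (hε : 0 < ε)
    (hsmall : 2 * ε * (1 + 2 * Real.pi / Real.log c) < 1) :
    StrictAntiOn (fun x : ℝ =>
        (1/2) * x ^ (-α) *
          (1 + 2 * ε * Real.sin ((2 * Real.pi * α / Real.log c) * Real.log x)))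
      (Set.Ioi 0) ∧
    StrictAnti (fun n : ℕ =>
        (1/2) * ((n + 1 : ℕ) : ℝ) ^ (-α) *
          (1 + 2 * ε * Real.sin ((2 * Real.pi * α / Real.log c) * Real.log ((n + 1 : ℕ) : ℝ)))) := by
  set L := Real.log c with hLdef
  have hL : 0 < L := Real.log_pos hc
  set k := 2 * Real.pi * α / L with hkdef
  have hπ : 0 < Real.pi := Real.pi_pos
  have hk : 0 < k := by positivity
  -- clear the division in hsmall
  have hs'' : 2 * ε * L + 4 * ε * Real.pi < L := by
    have h := mul_lt_mul_of_pos_right hsmall hL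
    have e : 2 * ε * (1 + 2 * Real.pi / L) * L = 2 * ε * L + 4 * ε * Real.pi := by
      field_simp; ring
    rw [e, one_mul] at h
    exact h
  have hk2 : 2 * ε * k < α * (1 - 2 * ε) := by
    have e : 2 * ε * k = 4 * ε * Real.pi * α / L := by rw [hkdef]; ring
    rw [e, div_lt_iff₀ hL]
    nlinarith [mul_lt_mul_of_pos_left hs'' hα0]
  -- derivative computation
  have hder : ∀ x ∈ Set.Ioi (0:ℝ),
      HasDerivAt (fun x : ℝ =>
        (1/2) * x ^ (-α) * (1 + 2 * ε * Real.sin (k * Real.log x)))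
        ((1/2 * (-α * x ^ (-α - 1))) * (1 + 2 * ε * Real.sin (k * Real.log x))
          + (1/2 * x ^ (-α)) * (2 * ε * (Real.cos (k * Real.log x) * (k * x⁻¹)))) x := by
    intro x hx
    have hx0 : (0:ℝ) < x := hx
    have h1 : HasDerivAt (fun x : ℝ => x ^ (-α)) (-α * x ^ (-α - 1)) x :=
      Real.hasDerivAt_rpow_const (Or.inl hx0.ne')
    have h2 : HasDerivAt Real.log x⁻¹ x := Real.hasDerivAt_log hx0.ne'
    have h3 : HasDerivAt (fun x : ℝ => k * Real.log x) (k * x⁻¹) x := h2.const_mul k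
    have h4 : HasDerivAt (fun x : ℝ => Real.sin (k * Real.log x))
        (Real.cos (k * Real.log x) * (k * x⁻¹)) x := (Real.hasDerivAt_sin _).comp x h3
    have h5 : HasDerivAt (fun x : ℝ => 1 + 2 * ε * Real.sin (k * Real.log x))
        (2 * ε * (Real.cos (k * Real.log x) * (k * x⁻¹))) x := (h4.const_mul (2*ε)).const_add 1
    have h6 := (h1.const_mul (1/2:ℝ)).mul h5
    exact h6
  have hderiv_neg : ∀ x ∈ Set.Ioi (0:ℝ),
      ((1/2 * (-α * x ^ (-α - 1))) * (1 + 2 * ε * Real.sin (k * Real.log x))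
        + (1/2 * x ^ (-α)) * (2 * ε * (Real.cos (k * Real.log x) * (k * x⁻¹)))) < 0 := by
    intro x hx
    have hx0 : (0:ℝ) < x := hx
    set s := Real.sin (k * Real.log x) with hs
    set c' := Real.cos (k * Real.log x) with hc'
    have hsin : -1 ≤ s := Real.neg_one_le_sin _
    have hcos : c' ≤ 1 := Real.cos_le_one _
    have hxx : x ^ (-α - 1) = x ^ (-α) * x⁻¹ := by
      rw [show -α - 1 = -α + (-1) by ring, Real.rpow_add hx0, Real.rpow_neg_one]
    have key : 2 * ε * k * c' < α * (1 + 2 * ε * s) := by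
      calc 2 * ε * k * c' ≤ 2 * ε * k := by
            have h := mul_le_mul_of_nonneg_left hcos (by positivity : (0:ℝ) ≤ 2 * ε * k)
            linarith
        _ < α * (1 - 2 * ε) := hk2
        _ ≤ α * (1 + 2 * ε * s) := by
            have h := mul_le_mul_of_nonneg_left hsin (by positivity : (0:ℝ) ≤ α * (2 * ε))
            nlinarith
    have hA : 0 < x ^ (-α) := Real.rpow_pos_of_pos hx0 _
    have hB : 0 < x⁻¹ := inv_pos.mpr hx0
    have hd : (1/2 * (-α * x ^ (-α - 1))) * (1 + 2 * ε * s)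
        + (1/2 * x ^ (-α)) * (2 * ε * (c' * (k * x⁻¹)))
        = (1/2) * (x ^ (-α) * x⁻¹) * (2 * ε * k * c' - α * (1 + 2 * ε * s)) := by
      rw [hxx]; ring
    rw [hd]
    have : 2 * ε * k * c' - α * (1 + 2 * ε * s) < 0 := by linarith
    exact mul_neg_of_pos_of_neg (by positivity) this
  have part1 : StrictAntiOn (fun x : ℝ =>
      (1/2) * x ^ (-α) * (1 + 2 * ε * Real.sin (k * Real.log x))) (Set.Ioi 0) := by
    apply strictAntiOn_of_deriv_neg (convex_Ioi 0)
    · exact fun x hx => ((hder x hx).continuousAt).continuousWithinAt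
    · intro x hx
      rw [interior_Ioi] at hx
      rw [(hder x hx).deriv]
      exact hderiv_neg x hx
  refine ⟨part1, ?_⟩
  intro a b hab
  have ha : ((a + 1 : ℕ) : ℝ) ∈ Set.Ioi (0:ℝ) := by
    simp only [Set.mem_Ioi]; positivity
  have hb : ((b + 1 : ℕ) : ℝ) ∈ Set.Ioi (0:ℝ) := by
    simp only [Set.mem_Ioi]; positivity
  have hlt : ((a + 1 : ℕ) : ℝ) < ((b + 1 : ℕ) : ℝ) := by exact_mod_cast Nat.succ_lt_succ hab
  exact part1 ha hb hlt
end

section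
/- Let ξ_n = (1/2) n^{−α}(1 + 2^{{α log₂ n}}) for n ≥ 1, where {·} denotes the fractional part. Then liminf_{n→∞} ξ_n/ξ_{n+1} = 1 and limsup_{n→∞} ξ_n/ξ_{n+1} = 3/2; in fact the set of limit points of the sequence (ξ_n/ξ_{n+1})_{n≥1} is exactly {1, 3/2}. Consequently, the piecewise linear Wang-type map built on the points ξ_n has no (one-sided) derivative at 0. -/
open Set Filter Topology Real

/-!
Writing `k(x) = ⌊α log₂ x⌋`, the identity `n^{-α} 2^{{α log₂ n}} = 2^{-k(n)}` gives
`ξ_n = (n^{-α} + 2^{-k(n)}) / 2`, where `n^{-α} ≤ 2^{-k(n)} < 2 n^{-α}`. Since `0 < α < 1`,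
`k(n+1)` is either `k(n)` or `k(n) + 1`. In the first case `ξ_n/ξ_{n+1}` lies between `1` and
`(n+1)^α/n^α`; in the second the dyadic term halves and the ratio lies between `3/2` and
`(n+1)^α/n^α + 1/2`. Both cases occur infinitely often: `k → ∞` forces infinitely many jumps, and
`k(2m) ≤ k(m) + 1` forbids jumping at every step from some point on. Hence the ratio shadows a
sequence taking the values `1` and `3/2` infinitely often, which gives its cluster points, liminf
and limsup. Finally the Wang map sends `ξ_{n+1}` to `ξ_n`, so `T x / x` takes the values
`ξ_n/ξ_{n+1}` along `ξ_{n+1} → 0⁺` and cannot converge.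
-/

theorem Int.floor_eq_or_eq_add_one_of_le_of_le_add_one {R : Type*} [Ring R] [LinearOrder R]
    [IsStrictOrderedRing R] [FloorRing R] {x y : R} (hxy : x ≤ y) (hyx : y ≤ x + 1) :
    ⌊y⌋ = ⌊x⌋ ∨ ⌊y⌋ = ⌊x⌋ + 1 := by
  have h₁ := Int.floor_le_floor hxy
  have h₂ : ⌊y⌋ ≤ ⌊x⌋ + 1 := (Int.floor_le_floor hyx).trans_eq (Int.floor_add_one x)
  omega

theorem frequently_atTop_succ_ne_of_tendsto {β : Type*} [Preorder β] [NoTopOrder β] {k : ℕ → β}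
    (hk : Tendsto k atTop atTop) : ∃ᶠ n in atTop, k (n + 1) ≠ k n := by
  intro hconst
  obtain ⟨N, hN⟩ := eventually_atTop.1 hconst
  have hk_eq : ∀ n ≥ N, k n = k N := by
    intro n hn
    induction n, hn using Nat.le_induction with
    | base => rfl
    | succ n hn ih => rw [← ih]; exact not_not.1 (hN n hn)
  exact not_tendsto_const_atTop (k N) atTop (hk.congr' (eventually_atTop.2 ⟨N, hk_eq⟩))

theorem frequently_atTop_succ_ne_add_one {k : ℕ → ℤ} (hk : ∀ m, k (2 * m) ≤ k m + 1) :
    ∃ᶠ n in atTop, k (n + 1) ≠ k n + 1 := by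
  intro hsteps
  obtain ⟨N, hN⟩ := eventually_atTop.1 hsteps
  have hlin : ∀ t : ℕ, k (N + 2 + t) = k (N + 2) + t := by
    intro t
    induction t with
    | zero => simp
    | succ t ih =>
      rw [← add_assoc, not_not.1 (hN _ (by omega)), ih]
      push_cast
      ring
  have h := hk (N + 2)
  rw [two_mul, hlin] at h
  push_cast at h
  omega

theorem MapClusterPt.of_tendsto_dist {X ι : Type*} [PseudoMetricSpace X] {F : Filter ι}
    {f g : ι → X} {x : X} (hx : MapClusterPt x F f)
    (hfg : Tendsto (fun i => dist (f i) (g i)) F (𝓝 0)) : MapClusterPt x F g := by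
  rw [Metric.nhds_basis_ball.mapClusterPt_iff_frequently] at hx ⊢
  intro ε hε
  have hclose : ∀ᶠ i in F, dist (f i) (g i) < ε / 2 := hfg.eventually (gt_mem_nhds (half_pos hε))
  refine ((hx (ε / 2) (half_pos hε)).and_eventually hclose).mono fun i ⟨hfi, hi⟩ => ?_
  rw [Metric.mem_ball] at hfi ⊢
  calc dist (g i) x ≤ dist (f i) (g i) + dist (f i) x := dist_triangle_left _ _ _
    _ < ε / 2 + ε / 2 := add_lt_add hi hfi
    _ = ε := add_halves ε

theorem setOf_mapClusterPt_eq_of_tendsto_dist {X ι : Type*} [PseudoMetricSpace X] {F : Filter ι}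
    {f g : ι → X} (hfg : Tendsto (fun i => dist (f i) (g i)) F (𝓝 0)) :
    {x | MapClusterPt x F f} = {x | MapClusterPt x F g} :=
  Set.ext fun _ => ⟨fun h => h.of_tendsto_dist hfg,
    fun h => h.of_tendsto_dist (by simpa only [dist_comm] using hfg)⟩

theorem setOf_mapClusterPt_eq_of_frequently_eq {X ι : Type*} [TopologicalSpace X] {F : Filter ι}
    {g : ι → X} {s : Set X} (hs : IsClosed s) (hg : ∀ᶠ i in F, g i ∈ s)
    (hfreq : ∀ x ∈ s, ∃ᶠ i in F, g i = x) : {x | MapClusterPt x F g} = s := by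
  ext x
  refine ⟨fun hx => hs.mem_of_mapClusterPt hx hg, fun hx => ?_⟩
  exact mapClusterPt_iff_frequently.2 fun t ht =>
    (hfreq x hx).mono fun i hi => hi ▸ mem_of_mem_nhds ht

theorem MapClusterPt.eq_of_tendsto {X ι : Type*} [TopologicalSpace X] [T2Space X] {F : Filter ι}
    {u : ι → X} {x y : X} (hx : MapClusterPt x F u) (hu : Tendsto u F (𝓝 y)) : x = y :=
  eq_of_nhds_neBot (ClusterPt.mono hx hu).neBot

theorem not_exists_tendsto_of_mapClusterPt_ne {X Y : Type*} [TopologicalSpace Y] [T2Space Y]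
    {l : Filter X} {F : X → Y} {u : ℕ → X} {v : ℕ → Y} {y₁ y₂ : Y} (hu : Tendsto u atTop l)
    (huv : ∀ᶠ n in atTop, F (u n) = v n) (hy₁ : MapClusterPt y₁ atTop v)
    (hy₂ : MapClusterPt y₂ atTop v) (hne : y₁ ≠ y₂) : ¬ ∃ L, Tendsto F l (𝓝 L) := by
  rintro ⟨L, hL⟩
  have hv : Tendsto v atTop (𝓝 L) := (hL.comp hu).congr' huv
  exact hne ((hy₁.eq_of_tendsto hv).trans (hy₂.eq_of_tendsto hv).symm)

noncomputable def dyadicExponent (α x : ℝ) : ℤ := ⌊α * logb 2 x⌋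

theorem dyadicExponent_eq_or_eq_add_one {α x y : ℝ} (hα₀ : 0 ≤ α) (hα₁ : α ≤ 1) (hx : 0 < x)
    (hxy : x ≤ y) (hy : y ≤ 2 * x) :
    dyadicExponent α y = dyadicExponent α x ∨ dyadicExponent α y = dyadicExponent α x + 1 := by
  have hlog : logb 2 x ≤ logb 2 y := logb_le_logb_of_le one_lt_two hx hxy
  have hlog₂ : logb 2 y ≤ logb 2 x + 1 :=
    calc logb 2 y ≤ logb 2 (2 * x) := logb_le_logb_of_le one_lt_two (hx.trans_le hxy) hy
      _ = logb 2 x + 1 := by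
        rw [logb_mul two_ne_zero hx.ne', logb_self_eq_one one_lt_two, add_comm]
  apply Int.floor_eq_or_eq_add_one_of_le_of_le_add_one
  · exact mul_le_mul_of_nonneg_left hlog hα₀
  · nlinarith

theorem tendsto_dyadicExponent_atTop {α : ℝ} (hα : 0 < α) :
    Tendsto (dyadicExponent α) atTop atTop :=
  tendsto_floor_atTop.comp (Tendsto.const_mul_atTop hα (tendsto_logb_atTop one_lt_two))

theorem rpow_neg_mul_two_rpow_fract {α x : ℝ} (hx : 0 < x) :
    x ^ (-α) * (2 : ℝ) ^ Int.fract (α * logb 2 x) = (2 : ℝ) ^ (-dyadicExponent α x) := by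
  have hx' : x ^ (-α) = (2 : ℝ) ^ (-(α * logb 2 x)) := by
    rw [rpow_def_of_pos hx, rpow_def_of_pos two_pos, logb]
    congr 1
    field_simp
  rw [hx', ← rpow_add two_pos, ← rpow_intCast, Int.fract, dyadicExponent]
  congr 1
  push_cast
  ring

theorem two_zpow_neg_dyadicExponent_mem_Ico {α x : ℝ} (hx : 0 < x) :
    (2 : ℝ) ^ (-dyadicExponent α x) ∈ Ico (x ^ (-α)) (2 * x ^ (-α)) := by
  rw [← rpow_neg_mul_two_rpow_fract hx]
  have hpos : 0 < x ^ (-α) := rpow_pos_of_pos hx _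
  have h₁ : 1 ≤ (2 : ℝ) ^ Int.fract (α * logb 2 x) :=
    one_le_rpow one_le_two (Int.fract_nonneg _)
  have h₂ : (2 : ℝ) ^ Int.fract (α * logb 2 x) < 2 := by
    simpa using rpow_lt_rpow_of_exponent_lt one_lt_two (Int.fract_lt_one (α * logb 2 x))
  constructor <;> nlinarith

noncomputable def wangNode (α : ℝ) (n : ℕ) : ℝ :=
  ((n : ℝ) ^ (-α) + (2 : ℝ) ^ (-dyadicExponent α n)) / 2

/-- The value near which `wangNode α n / wangNode α (n + 1)` lies. -/
noncomputable def jumpFactor (α : ℝ) (n : ℕ) : ℝ :=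
  if dyadicExponent α (n + 1 : ℕ) = dyadicExponent α n then 1 else 3 / 2

section WangNode

variable {α : ℝ}

theorem half_mul_rpow_neg_mul_one_add_eq_wangNode {n : ℕ} (hn : 0 < n) :
    (1 / 2) * (n : ℝ) ^ (-α) * (1 + (2 : ℝ) ^ Int.fract (α * logb 2 n)) = wangNode α n := by
  rw [wangNode, ← rpow_neg_mul_two_rpow_fract (Nat.cast_pos.2 hn)]
  ring

theorem wangNode_pos (n : ℕ) : 0 < wangNode α n := by
  unfold wangNode
  positivity

theorem dyadicExponent_succ {n : ℕ} (hα₀ : 0 ≤ α) (hα₁ : α ≤ 1) (hn : 0 < n) :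
    dyadicExponent α (n + 1 : ℕ) = dyadicExponent α n ∨
      dyadicExponent α (n + 1 : ℕ) = dyadicExponent α n + 1 := by
  have hn' : (1 : ℝ) ≤ n := Nat.one_le_cast.2 hn
  exact dyadicExponent_eq_or_eq_add_one hα₀ hα₁ (by positivity) (by push_cast; linarith)
    (by push_cast; linarith)

theorem wangNode_succ_lt {n : ℕ} (hα₀ : 0 < α) (hα₁ : α ≤ 1) (hn : 0 < n) :
    wangNode α (n + 1) < wangNode α n := by
  have hpow : ((n + 1 : ℕ) : ℝ) ^ (-α) < (n : ℝ) ^ (-α) :=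
    rpow_lt_rpow_of_neg (Nat.cast_pos.2 hn) (by push_cast; linarith) (neg_neg_of_pos hα₀)
  have hdyadic : (2 : ℝ) ^ (-dyadicExponent α (n + 1 : ℕ)) ≤ (2 : ℝ) ^ (-dyadicExponent α n) := by
    apply zpow_le_zpow_right₀ one_le_two
    rcases dyadicExponent_succ hα₀.le hα₁ hn with h | h <;> omega
  unfold wangNode
  linarith

theorem tendsto_wangNode_atTop (hα : 0 < α) : Tendsto (wangNode α) atTop (𝓝[>] 0) := by
  refine tendsto_nhdsWithin_iff.2 ⟨?_, Eventually.of_forall wangNode_pos⟩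
  have hpow : Tendsto (fun n : ℕ => (3 / 2) * (n : ℝ) ^ (-α)) atTop (𝓝 0) := by
    simpa using ((tendsto_rpow_neg_atTop hα).comp tendsto_natCast_atTop_atTop).const_mul (3 / 2)
  refine squeeze_zero' (Eventually.of_forall fun n => (wangNode_pos n).le) ?_ hpow
  filter_upwards [eventually_gt_atTop 0] with n hn
  have := (two_zpow_neg_dyadicExponent_mem_Ico (α := α) (Nat.cast_pos.2 hn)).2
  unfold wangNode
  linarith

theorem one_le_add_div_add_le_div {a b c : ℝ} (hb : 0 < b) (hba : b ≤ a) (hc : 0 ≤ c) :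
    1 ≤ (a + c) / (b + c) ∧ (a + c) / (b + c) ≤ a / b := by
  constructor
  · rw [le_div_iff₀ (by positivity)]
    linarith
  · rw [div_le_div_iff₀ (by positivity) hb]
    nlinarith

theorem three_halves_le_add_two_mul_div_add_le {a b c : ℝ} (hb : 0 < b) (hbc : b ≤ c)
    (hca : c ≤ a) : 3 / 2 ≤ (a + 2 * c) / (b + c) ∧ (a + 2 * c) / (b + c) ≤ a / b + 1 / 2 := by
  have hbc₀ : 0 < b + c := by linarith
  constructor
  · rw [le_div_iff₀ hbc₀]
    linarith
  · rw [div_add' _ _ _ hb.ne', div_le_div_iff₀ hbc₀ hb]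
    nlinarith

theorem wangNode_div_succ_mem_Icc {n : ℕ} (hα₀ : 0 ≤ α) (hα₁ : α ≤ 1) (hn : 0 < n) :
    wangNode α n / wangNode α (n + 1) ∈ Icc (jumpFactor α n)
      (jumpFactor α n + ((n : ℝ) ^ (-α) / ((n + 1 : ℕ) : ℝ) ^ (-α) - 1)) := by
  have hn₀ : (0 : ℝ) < n := Nat.cast_pos.2 hn
  have hc := two_zpow_neg_dyadicExponent_mem_Ico (α := α) hn₀
  have hc' := two_zpow_neg_dyadicExponent_mem_Ico (α := α) (x := (n + 1 : ℕ)) (by positivity)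
  have hb : 0 < ((n + 1 : ℕ) : ℝ) ^ (-α) := by positivity
  have hba : ((n + 1 : ℕ) : ℝ) ^ (-α) ≤ (n : ℝ) ^ (-α) :=
    rpow_le_rpow_of_nonpos hn₀ (by push_cast; linarith) (neg_nonpos.2 hα₀)
  have hratio : wangNode α n / wangNode α (n + 1) =
      ((n : ℝ) ^ (-α) + 2 ^ (-dyadicExponent α n)) /
        (((n + 1 : ℕ) : ℝ) ^ (-α) + 2 ^ (-dyadicExponent α (n + 1 : ℕ))) := by
    rw [wangNode, wangNode, div_div_div_cancel_right₀ two_ne_zero]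
  rw [hratio, jumpFactor]
  rcases dyadicExponent_succ hα₀ hα₁ hn with h | h
  · rw [if_pos h, h]
    obtain ⟨h₁, h₂⟩ := one_le_add_div_add_le_div hb hba (zpow_pos two_pos _).le
    exact ⟨h₁, by linarith⟩
  · have hhalf : (2 : ℝ) ^ (-dyadicExponent α n) = 2 * 2 ^ (-dyadicExponent α (n + 1 : ℕ)) := by
      rw [h, zpow_neg, zpow_neg, zpow_add_one₀ two_ne_zero, mul_inv]
      ring
    rw [if_neg (by omega), hhalf]
    obtain ⟨h₁, h₂⟩ := three_halves_le_add_two_mul_div_add_le (a := (n : ℝ) ^ (-α)) hb hc'.1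
      (by linarith [hc.2])
    exact ⟨h₁, by linarith⟩

theorem tendsto_rpow_neg_div_rpow_neg_succ (α : ℝ) :
    Tendsto (fun n : ℕ => (n : ℝ) ^ (-α) / ((n + 1 : ℕ) : ℝ) ^ (-α)) atTop (𝓝 1) := by
  have h := ((continuousAt_rpow_const 1 (-α) (Or.inl one_ne_zero)).tendsto).comp
    (tendsto_natCast_div_add_atTop (1 : ℝ))
  rw [one_rpow] at h
  refine h.congr fun n => ?_
  rw [Function.comp_apply, div_rpow (Nat.cast_nonneg n) (by positivity), Nat.cast_succ]

theorem tendsto_dist_wangNode_div_succ_jumpFactor (hα₀ : 0 ≤ α) (hα₁ : α ≤ 1) :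
    Tendsto (fun n => dist (wangNode α n / wangNode α (n + 1)) (jumpFactor α n)) atTop (𝓝 0) := by
  have h := (tendsto_rpow_neg_div_rpow_neg_succ α).sub_const 1
  rw [sub_self] at h
  refine squeeze_zero' (Eventually.of_forall fun n => dist_nonneg) ?_ h
  filter_upwards [eventually_gt_atTop 0] with n hn
  obtain ⟨h₁, h₂⟩ := wangNode_div_succ_mem_Icc hα₀ hα₁ hn
  rw [Real.dist_eq, abs_of_nonneg (by linarith)]
  linarith

theorem eventually_wangNode_div_succ_mem_Icc (hα₀ : 0 ≤ α) (hα₁ : α ≤ 1) :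
    ∀ᶠ n in atTop, wangNode α n / wangNode α (n + 1) ∈ Icc 1 2 := by
  have hsmall : ∀ᶠ n : ℕ in atTop, (n : ℝ) ^ (-α) / ((n + 1 : ℕ) : ℝ) ^ (-α) < 3 / 2 :=
    (tendsto_rpow_neg_div_rpow_neg_succ α).eventually (gt_mem_nhds (by norm_num))
  filter_upwards [hsmall, eventually_gt_atTop 0] with n hsmall hn
  obtain ⟨h₁, h₂⟩ := wangNode_div_succ_mem_Icc hα₀ hα₁ hn
  have : 1 ≤ jumpFactor α n ∧ jumpFactor α n ≤ 3 / 2 := by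
    unfold jumpFactor
    split_ifs <;> norm_num
  exact ⟨by linarith, by linarith⟩

theorem frequently_jumpFactor_eq_one (hα₀ : 0 ≤ α) (hα₁ : α ≤ 1) :
    ∃ᶠ n in atTop, jumpFactor α n = 1 := by
  have hdouble : ∀ m : ℕ, dyadicExponent α (2 * m : ℕ) ≤ dyadicExponent α m + 1 := by
    intro m
    rcases m.eq_zero_or_pos with rfl | hm
    · simp
    · rcases dyadicExponent_eq_or_eq_add_one hα₀ hα₁ (Nat.cast_pos.2 hm) (x := m)
        (y := (2 * m : ℕ)) (by push_cast; linarith) (by push_cast; rfl) with h | h <;> omega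
  refine ((frequently_atTop_succ_ne_add_one (k := fun n : ℕ => dyadicExponent α n)
    hdouble).and_eventually (eventually_gt_atTop 0)).mono fun n ⟨hne, hn⟩ => ?_
  rcases dyadicExponent_succ hα₀ hα₁ hn with h | h
  · exact if_pos h
  · exact absurd h hne

theorem frequently_jumpFactor_eq_three_halves (hα : 0 < α) :
    ∃ᶠ n in atTop, jumpFactor α n = 3 / 2 :=
  (frequently_atTop_succ_ne_of_tendsto ((tendsto_dyadicExponent_atTop hα).comp
    tendsto_natCast_atTop_atTop)).mono fun _ h => if_neg h

theorem setOf_mapClusterPt_wangNode_div_succ (hα₀ : 0 < α) (hα₁ : α ≤ 1) :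
    {L | MapClusterPt L atTop fun n => wangNode α n / wangNode α (n + 1)} = {1, 3 / 2} := by
  rw [setOf_mapClusterPt_eq_of_tendsto_dist (tendsto_dist_wangNode_div_succ_jumpFactor hα₀.le hα₁)]
  refine setOf_mapClusterPt_eq_of_frequently_eq (Set.toFinite _).isClosed
    (Eventually.of_forall fun n => ?_) ?_
  · unfold jumpFactor
    split_ifs <;> simp
  · rintro x (rfl | rfl)
    · exact frequently_jumpFactor_eq_one hα₀.le hα₁
    · exact frequently_jumpFactor_eq_three_halves hα₀

end WangNode

theorem stmt_16_general (α : ℝ) (hα0 : 0 < α) (hα1 : α < 1)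
    (ξ : ℕ → ℝ)
    (hξ : ∀ n : ℕ, 1 ≤ n → ξ n =
      (1/2) * (n : ℝ) ^ (-α) * (1 + (2 : ℝ) ^ Int.fract (α * Real.logb 2 (n : ℝ))))
    (T : ℝ → ℝ)
    (hT : ∀ n : ℕ, 1 ≤ n → ∀ x ∈ Set.Icc (ξ (n + 1)) (ξ n),
      T x = ((ξ n - x) * ξ n + (x - ξ (n + 1)) * ξ (n - 1)) / (ξ n - ξ (n + 1))) :
    Filter.liminf (fun n : ℕ => ξ n / ξ (n + 1)) Filter.atTop = 1 ∧
    Filter.limsup (fun n : ℕ => ξ n / ξ (n + 1)) Filter.atTop = 3 / 2 ∧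
    {L : ℝ | MapClusterPt L Filter.atTop (fun n : ℕ => ξ n / ξ (n + 1))} = {1, 3 / 2} ∧
    ¬ ∃ L : ℝ, Filter.Tendsto (fun x => T x / x) (nhdsWithin 0 (Set.Ioi 0)) (nhds L) := by
  have hξw : ∀ n, 0 < n → ξ n = wangNode α n := fun n hn =>
    (hξ n hn).trans (half_mul_rpow_neg_mul_one_add_eq_wangNode hn)
  have hratio : (fun n => ξ n / ξ (n + 1)) =ᶠ[atTop] fun n => wangNode α n / wangNode α (n + 1) :=
    (eventually_gt_atTop 0).mono fun n hn => by dsimp only; rw [hξw n hn, hξw (n + 1) n.succ_pos]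
  have hclust : {L | MapClusterPt L atTop fun n => ξ n / ξ (n + 1)} = {1, 3 / 2} := by
    simpa only [hratio.mapClusterPt_iff] using setOf_mapClusterPt_wangNode_div_succ hα0 hα1.le
  have hIcc : ∀ᶠ n in atTop, ξ n / ξ (n + 1) ∈ Icc 1 2 := by
    filter_upwards [hratio, eventually_wangNode_div_succ_mem_Icc hα0.le hα1.le] with n h h'
    rwa [h]
  have hbdd_le := isBoundedUnder_of_eventually_le (hIcc.mono fun _ h => h.2)
  have hbdd_ge := isBoundedUnder_of_eventually_ge (hIcc.mono fun _ h => h.1)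
  have hclust_mem : ∀ x ∈ ({1, 3 / 2} : Set ℝ), MapClusterPt x atTop fun n => ξ n / ξ (n + 1) :=
    fun x hx => by rwa [← hclust] at hx
  refine ⟨(isLeast_mapClusterPt_liminf hbdd_le.isCoboundedUnder_ge hbdd_ge).unique
      (by rw [hclust]; convert isLeast_pair (a := (1 : ℝ)) (b := 3 / 2); norm_num),
    (isGreatest_mapClusterPt_limsup hbdd_ge.isCoboundedUnder_le hbdd_le).unique
      (by rw [hclust]; convert isGreatest_pair (a := (1 : ℝ)) (b := 3 / 2); norm_num), hclust, ?_⟩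
  have hnode : ∀ᶠ n in atTop, T (ξ (n + 1)) / ξ (n + 1) = ξ n / ξ (n + 1) := by
    filter_upwards [eventually_gt_atTop 0] with n hn
    have hlt : ξ (n + 1) < ξ n := by
      rw [hξw n hn, hξw (n + 1) n.succ_pos]
      exact wangNode_succ_lt hα0 hα1.le hn
    rw [hT n hn _ ⟨le_rfl, hlt.le⟩, sub_self, zero_mul, add_zero,
      mul_div_cancel_left₀ _ (sub_ne_zero.2 hlt.ne')]
  have hnode_lim : Tendsto (fun n => ξ (n + 1)) atTop (𝓝[>] 0) :=
    ((tendsto_wangNode_atTop hα0).comp (tendsto_add_atTop_nat 1)).congr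
      fun n => (hξw (n + 1) n.succ_pos).symm
  exact not_exists_tendsto_of_mapClusterPt_ne hnode_lim hnode (hclust_mem 1 (by simp))
    (hclust_mem (3 / 2) (by simp)) (by norm_num)

/-- With `ξ_n = (1/2) n^(−α)(1 + 2^{αlog₂ n})` (fractional part in the
exponent), the set of limit points of `ξ_n/ξ_{n+1}` is exactly `{1, 3/2}`; in particular
`liminf = 1` and `limsup = 3/2`, and the piecewise linear Wang-type map built on the points
`ξ_n` has no (one-sided) derivative at `0`. -/
theorem stmt_16 (α : ℝ) (hα0 : 0 < α) (hα1 : α < 1)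
    (ξ : ℕ → ℝ) (hξ0 : ξ 0 = 1)
    (hξ : ∀ n : ℕ, 1 ≤ n → ξ n =
      (1/2) * (n : ℝ) ^ (-α) * (1 + (2 : ℝ) ^ Int.fract (α * Real.logb 2 (n : ℝ))))
    (T : ℝ → ℝ)
    (hT : ∀ n : ℕ, 1 ≤ n → ∀ x ∈ Set.Icc (ξ (n + 1)) (ξ n),
      T x = ((ξ n - x) * ξ n + (x - ξ (n + 1)) * ξ (n - 1)) / (ξ n - ξ (n + 1))) :
    Filter.liminf (fun n : ℕ => ξ n / ξ (n + 1)) Filter.atTop = 1 ∧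
    Filter.limsup (fun n : ℕ => ξ n / ξ (n + 1)) Filter.atTop = 3 / 2 ∧
    {L : ℝ | MapClusterPt L Filter.atTop (fun n : ℕ => ξ n / ξ (n + 1))} = {1, 3 / 2} ∧
    ¬ ∃ L : ℝ, Filter.Tendsto (fun x => T x / x) (nhdsWithin 0 (Set.Ioi 0)) (nhds L) :=
  stmt_16_general α hα0 hα1 ξ hξ T hT
end

section
/- Assume 2^{k/α} is not an integer for any k ≥ 1 (e.g. 1/α irrational). Let (n_j) be a strictly increasing sequence of positive integers with n_j ∉ {⌊2^{k/α}⌋ : k ∈ ℕ} for all j. Then ⌊α log₂ n_j⌋ = ⌊α log₂ (n_j + 1)⌋ for all j, hence {α log₂ n_j} − {α log₂(n_j+1)} → 0 and lim_{j→∞} (1 + 2^{{α log₂ n_j}}) / (1 + 2^{{α log₂ (n_j+1)}}) = 1. In particular, with ξ_n = (1/2) n^{−α}(1 + 2^{{α log₂ n}}), one has ξ_{n_j}/ξ_{n_j+1} → 1: the 'derivative at 0 along the subsequence' equals 1. -/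
open Set Filter Topology Real

/-!
If `⌊α log₂ m⌋ < ⌊α log₂ (m + 1)⌋`, the integer `k = ⌊α log₂ (m + 1)⌋ ≥ 1` satisfies
`m < 2^{k/α} ≤ m + 1`; as `2^{k/α}` is not an integer this forces `m = ⌊2^{k/α}⌋`, which the
sequence avoids. With equal floors the difference of fractional parts is
`α (log₂ n_j - log₂ (n_j + 1)) → 0`. Writing `(1 + 2^u)/(1 + 2^v) - 1` as
`2^v/(1 + 2^v) · (2^{u-v} - 1)` bounds it by `|2^{u-v} - 1|`, and
`ξ_{n_j}/ξ_{n_j+1}` is that ratio times `((n_j + 1)/n_j)^α → 1`.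
-/

theorem Int.fract_sub_fract_of_floor_eq {R : Type*} [Ring R] [LinearOrder R] [FloorRing R]
    {x y : R} (h : ⌊x⌋ = ⌊y⌋) : Int.fract x - Int.fract y = x - y := by
  simp only [Int.fract, h]
  abel

namespace Real

variable {b α : ℝ}

theorem mul_logb_lt_iff_lt_rpow (hb : 1 < b) (hα : 0 < α) {x : ℝ} (hx : 0 < x) (t : ℝ) :
    α * logb b x < t ↔ x < b ^ (t / α) := by
  rw [← logb_lt_iff_lt_rpow hb hx, lt_div_iff₀ hα, mul_comm]

theorem floor_mul_logb_natCast_add_one_eq (hb : 1 < b) (hα : 0 < α) {m : ℕ} (hm : 1 ≤ m)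
    (hnotint : ∀ k : ℕ, 1 ≤ k → ¬ ∃ z : ℤ, b ^ ((k : ℝ) / α) = z)
    (havoid : ∀ k : ℕ, 1 ≤ k → m ≠ ⌊b ^ ((k : ℝ) / α)⌋₊) :
    ⌊α * logb b m⌋ = ⌊α * logb b (m + 1)⌋ := by
  have hm0 : (0 : ℝ) < m := by exact_mod_cast hm
  have hmono : α * logb b m ≤ α * logb b (m + 1) :=
    mul_le_mul_of_nonneg_left (logb_le_logb_of_le hb hm0 (by linarith)) hα.le
  by_contra hne
  have hlt := (Int.floor_mono hmono).lt_of_ne hne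
  have hfloor0 : 0 ≤ ⌊α * logb b m⌋ :=
    Int.floor_nonneg.2 (mul_nonneg hα.le (logb_nonneg hb (by exact_mod_cast hm)))
  obtain ⟨k, hk⟩ : ∃ k : ℕ, (k : ℤ) = ⌊α * logb b (m + 1)⌋ := ⟨_, Int.toNat_of_nonneg (by omega)⟩
  have hk1 : 1 ≤ k := by omega
  have hkR : (k : ℝ) = ⌊α * logb b (m + 1)⌋ := by rw [← hk, Int.cast_natCast]
  have hlower : (m : ℝ) < b ^ ((k : ℝ) / α) := by
    rw [← mul_logb_lt_iff_lt_rpow hb hα hm0]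
    calc α * logb b m < ⌊α * logb b (m : ℝ)⌋ + 1 := Int.lt_floor_add_one _
      _ ≤ k := by rw [hkR]; exact_mod_cast hlt
  have hupper : b ^ ((k : ℝ) / α) < m + 1 := by
    refine lt_of_le_of_ne ?_ fun h => hnotint k hk1 ⟨m + 1, by push_cast; exact h⟩
    rw [← not_lt, ← mul_logb_lt_iff_lt_rpow hb hα (by positivity), not_lt, hkR]
    exact Int.floor_le _
  exact havoid k hk1 (Nat.floor_eq_iff (by positivity) |>.2 ⟨hlower.le, hupper⟩).symm

theorem abs_one_add_rpow_div_one_add_rpow_sub_one_le {c : ℝ} (hc : 0 < c) (u v : ℝ) :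
    |(1 + c ^ u) / (1 + c ^ v) - 1| ≤ |c ^ (u - v) - 1| := by
  have hv : 0 < c ^ v := rpow_pos_of_pos hc v
  have hden : 0 < 1 + c ^ v := by linarith
  have hsplit : (1 + c ^ u) / (1 + c ^ v) - 1 = c ^ v / (1 + c ^ v) * (c ^ (u - v) - 1) := by
    rw [rpow_sub hc]
    field_simp
    ring
  rw [hsplit, abs_mul]
  refine mul_le_of_le_one_left (abs_nonneg _) ?_
  rw [abs_of_pos (div_pos hv hden), div_le_one hden]
  linarith

theorem _root_.Filter.Tendsto.one_add_rpow_div_one_add_rpow {ι : Type*} {l : Filter ι} {c : ℝ}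
    (hc : 0 < c) {u v : ι → ℝ} (h : Tendsto (fun i => u i - v i) l (𝓝 0)) :
    Tendsto (fun i => (1 + c ^ u i) / (1 + c ^ v i)) l (𝓝 1) := by
  have hpow : Tendsto (fun i => c ^ (u i - v i) - 1) l (𝓝 0) := by
    simpa using ((continuousAt_const_rpow hc.ne').tendsto.comp h).sub_const 1
  rw [tendsto_iff_norm_sub_tendsto_zero]
  exact squeeze_zero (fun _ => norm_nonneg _)
    (fun i => abs_one_add_rpow_div_one_add_rpow_sub_one_le hc (u i) (v i))
    (tendsto_zero_iff_norm_tendsto_zero.1 hpow)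

theorem tendsto_add_one_div_self_rpow (α : ℝ) :
    Tendsto (fun x : ℝ => ((x + 1) / x) ^ α) atTop (𝓝 1) := by
  have h : Tendsto (fun x : ℝ => 1 + x⁻¹) atTop (𝓝 1) := by
    simpa using tendsto_inv_atTop_zero.const_add (1 : ℝ)
  have hpow : Tendsto (fun x : ℝ => (1 + x⁻¹) ^ α) atTop (𝓝 1) := by
    simpa [Function.comp_def] using
      (continuousAt_rpow_const 1 α (Or.inl one_ne_zero)).tendsto.comp h
  refine hpow.congr' ?_
  filter_upwards [eventually_ne_atTop 0] with x hx
  rw [add_div, div_self hx, one_div]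

theorem half_mul_rpow_neg_mul_div {x y : ℝ} (hx : 0 < x) (hy : 0 < y) (α A B : ℝ) :
    (1 / 2 * x ^ (-α) * A) / (1 / 2 * y ^ (-α) * B) = (y / x) ^ α * (A / B) := by
  rw [rpow_neg hx.le, rpow_neg hy.le, div_rpow hy.le hx.le]
  have := (rpow_pos_of_pos hx α).ne'
  have := (rpow_pos_of_pos hy α).ne'
  field_simp

end Real

theorem stmt_17_general (α : ℝ) (hα0 : 0 < α)
    (hnotint : ∀ k : ℕ, 1 ≤ k → ¬ ∃ m : ℤ, (2 : ℝ) ^ ((k : ℝ) / α) = (m : ℝ))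
    (n : ℕ → ℕ) (hmono : StrictMono n) (hpos : ∀ j, 1 ≤ n j)
    (havoid : ∀ j, ∀ k : ℕ, 1 ≤ k → n j ≠ ⌊(2 : ℝ) ^ ((k : ℝ) / α)⌋₊)
    (ξ : ℕ → ℝ)
    (hξ : ∀ m : ℕ, 1 ≤ m → ξ m =
      (1/2) * (m : ℝ) ^ (-α) * (1 + (2 : ℝ) ^ Int.fract (α * Real.logb 2 (m : ℝ)))) :
    (∀ j, ⌊α * Real.logb 2 (n j : ℝ)⌋ = ⌊α * Real.logb 2 ((n j : ℝ) + 1)⌋) ∧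
    Filter.Tendsto
      (fun j => Int.fract (α * Real.logb 2 (n j : ℝ)) - Int.fract (α * Real.logb 2 ((n j : ℝ) + 1)))
      Filter.atTop (nhds 0) ∧
    Filter.Tendsto
      (fun j => (1 + (2 : ℝ) ^ Int.fract (α * Real.logb 2 (n j : ℝ))) /
        (1 + (2 : ℝ) ^ Int.fract (α * Real.logb 2 ((n j : ℝ) + 1))))
      Filter.atTop (nhds 1) ∧
    Filter.Tendsto (fun j => ξ (n j) / ξ (n j + 1)) Filter.atTop (nhds 1) := by
  have hfloor j := floor_mul_logb_natCast_add_one_eq one_lt_two hα0 (hpos j) hnotint (havoid j)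
  have hn : Tendsto (fun j => (n j : ℝ)) atTop atTop :=
    tendsto_natCast_atTop_atTop.comp hmono.tendsto_atTop
  have hfract : Tendsto (fun j => Int.fract (α * logb 2 (n j : ℝ)) -
      Int.fract (α * logb 2 ((n j : ℝ) + 1))) atTop (𝓝 0) := by
    have hlog := ((tendsto_logb_comp_add_sub_logb (b := 2) 1).const_mul (-α)).comp hn
    rw [mul_zero] at hlog
    refine hlog.congr fun j => ?_
    rw [Int.fract_sub_fract_of_floor_eq (hfloor j), Function.comp_apply]
    ring
  have hratio := hfract.one_add_rpow_div_one_add_rpow two_pos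
  refine ⟨hfloor, hfract, hratio, ?_⟩
  have hξratio := ((tendsto_add_one_div_self_rpow α).comp hn).mul hratio
  rw [one_mul] at hξratio
  refine hξratio.congr fun j => ?_
  have hnj : (0 : ℝ) < n j := by exact_mod_cast hpos j
  rw [hξ _ (hpos j), hξ _ (by omega), Nat.cast_succ,
    half_mul_rpow_neg_mul_div hnj (by positivity)]
  rfl

/-- If `2^{k/α}` is never an integer for `k ≥ 1`, and `(n_j)` is a strictly
increasing sequence of positive integers avoiding `{⌊2^{k/α}⌋ : k ≥ 1}`, then
`⌊α log₂ n_j⌋ = ⌊α log₂ (n_j+1)⌋` for all `j`, hence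
`{α log₂ n_j} − {α log₂(n_j+1)} → 0`,
`(1 + 2^{{α log₂ n_j}})/(1 + 2^{{α log₂ (n_j+1)}}) → 1`, and with
`ξ_n = (1/2) n^(−α)(1 + 2^{{α log₂ n}})` one has `ξ_{n_j}/ξ_{n_j+1} → 1`. -/
theorem stmt_17 (α : ℝ) (hα0 : 0 < α) (hα1 : α < 1)
    (hnotint : ∀ k : ℕ, 1 ≤ k → ¬ ∃ m : ℤ, (2 : ℝ) ^ ((k : ℝ) / α) = (m : ℝ))
    (n : ℕ → ℕ) (hmono : StrictMono n) (hpos : ∀ j, 1 ≤ n j)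
    (havoid : ∀ j, ∀ k : ℕ, 1 ≤ k → n j ≠ ⌊(2 : ℝ) ^ ((k : ℝ) / α)⌋₊)
    (ξ : ℕ → ℝ)
    (hξ : ∀ m : ℕ, 1 ≤ m → ξ m =
      (1/2) * (m : ℝ) ^ (-α) * (1 + (2 : ℝ) ^ Int.fract (α * Real.logb 2 (m : ℝ)))) :
    (∀ j, ⌊α * Real.logb 2 (n j : ℝ)⌋ = ⌊α * Real.logb 2 ((n j : ℝ) + 1)⌋) ∧
    Filter.Tendsto
      (fun j => Int.fract (α * Real.logb 2 (n j : ℝ)) - Int.fract (α * Real.logb 2 ((n j : ℝ) + 1)))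
      Filter.atTop (nhds 0) ∧
    Filter.Tendsto
      (fun j => (1 + (2 : ℝ) ^ Int.fract (α * Real.logb 2 (n j : ℝ))) /
        (1 + (2 : ℝ) ^ Int.fract (α * Real.logb 2 ((n j : ℝ) + 1))))
      Filter.atTop (nhds 1) ∧
    Filter.Tendsto (fun j => ξ (n j) / ξ (n j + 1)) Filter.atTop (nhds 1) :=
  stmt_17_general α hα0 hnotint n hmono hpos havoid ξ hξ
end

section
/- For every n ≥ 1, the set {x ∈ [1/2,1] : τ(x) > n} coincides, up to a countable set, with the interval [1/2, (1+ξ_n)/2]; moreover {x : τ(x) = 1} = [3/4,1] and, up to endpoints, {x : τ(x) = n+1} = ((1+ξ_{n+1})/2, (1+ξ_n)/2] for n ≥ 1. Consequently m(τ > n) = ξ_n = (1/2) n^{−α}(1 + 2ε sin((2πα/log c) log n)) for all n ≥ 1, where m is the normalized Lebesgue measure on [1/2,1]. -/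
/-!
Since the profile `t ↦ ½ t^(-α) (1 + 2ε sin(θ log t))` has negative derivative under the
smallness condition, `ξ` is strictly decreasing to `0`. Each affine branch of `T` maps the open
rung `(ξ (n + 1), ξ n)` onto `(ξ n, ξ (n - 1))`, so a point `x ∈ (1/2, 1]` with
`2x - 1 ∈ (ξ (k + 1), ξ k)` climbs one rung per step and re-enters `[1/2, 1]` exactly at time
`k + 1`. Off the countably many break points `(1 + ξ k) / 2` this describes every level set of
`τ`, and `{τ > n}` is `[1/2, (1 + ξ n) / 2]` up to a null set.
-/

open Set Filter Topology Real MeasureTheory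

noncomputable def wangProfile (α ε θ t : ℝ) : ℝ :=
  1 / 2 * t ^ (-α) * (1 + 2 * ε * sin (θ * log t))

theorem hasDerivAt_wangProfile (α ε θ : ℝ) {t : ℝ} (ht : 0 < t) :
    HasDerivAt (wangProfile α ε θ) (1 / 2 * t ^ (-α - 1) *
      (-α * (1 + 2 * ε * sin (θ * log t)) + 2 * ε * θ * cos (θ * log t))) t := by
  have hsin : HasDerivAt (fun t => 1 + 2 * ε * sin (θ * log t))
      (2 * ε * (cos (θ * log t) * (θ * t⁻¹))) t :=
    ((((hasDerivAt_log ht.ne').const_mul θ).sin).const_mul (2 * ε)).const_add 1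
  have hpow : HasDerivAt (fun t => 1 / 2 * t ^ (-α)) (1 / 2 * (-α * t ^ (-α - 1))) t :=
    (hasDerivAt_rpow_const (Or.inl ht.ne')).const_mul _
  refine (hpow.mul hsin).congr_deriv ?_
  rw [rpow_sub ht, rpow_one, div_eq_mul_inv]
  ring

theorem strictAntiOn_wangProfile {α ε θ : ℝ} (hα : 0 < α)
    (h : 2 * |ε| * |θ| < α * (1 - 2 * |ε|)) : StrictAntiOn (wangProfile α ε θ) (Ici 1) := by
  refine strictAntiOn_of_deriv_neg (convex_Ici 1)
    (fun t ht => (hasDerivAt_wangProfile α ε θ (one_pos.trans_le ht)).continuousAt.continuousWithinAt)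
    fun t ht => ?_
  rw [interior_Ici] at ht
  have ht0 : 0 < t := one_pos.trans ht
  rw [(hasDerivAt_wangProfile α ε θ ht0).deriv]
  refine mul_neg_of_pos_of_neg (by positivity) ?_
  have hsin : -(2 * |ε|) ≤ 2 * ε * sin (θ * log t) := by
    have := neg_abs_le (2 * ε * sin (θ * log t))
    rw [abs_mul, abs_mul, abs_two] at this
    nlinarith [abs_sin_le_one (θ * log t), abs_nonneg ε]
  have hcos : 2 * ε * θ * cos (θ * log t) ≤ 2 * |ε| * |θ| := by
    have := le_abs_self (2 * ε * θ * cos (θ * log t))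
    rw [abs_mul, abs_mul, abs_mul, abs_two] at this
    nlinarith [mul_le_mul_of_nonneg_left (abs_cos_le_one (θ * log t))
      (by positivity : 0 ≤ 2 * |ε| * |θ|)]
  nlinarith

theorem tendsto_wangProfile_atTop {α : ℝ} (hα : 0 < α) (ε θ : ℝ) :
    Tendsto (wangProfile α ε θ) atTop (𝓝 0) := by
  have hpow : Tendsto (fun t : ℝ => 1 / 2 * t ^ (-α)) atTop (𝓝 0) := by
    simpa using (tendsto_rpow_neg_atTop hα).const_mul (1 / 2 : ℝ)
  refine hpow.zero_mul_isBoundedUnder_le (isBoundedUnder_of ⟨1 + 2 * |ε|, fun t => ?_⟩)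
  have := abs_sin_le_one (θ * log t)
  calc ‖1 + 2 * ε * sin (θ * log t)‖ ≤ ‖(1 : ℝ)‖ + ‖2 * ε * sin (θ * log t)‖ := norm_add_le _ _
    _ ≤ 1 + 2 * |ε| := by
      simp only [norm_one, norm_mul, Real.norm_eq_abs, abs_two]
      nlinarith [abs_nonneg ε]

theorem strictAnti_of_strictAntiOn_Ici_one {ξ : ℕ → ℝ} {f : ℝ → ℝ}
    (hf : StrictAntiOn f (Ici 1)) (hξ : ∀ n : ℕ, 1 ≤ n → ξ n = f n) (h01 : ξ 1 < ξ 0) :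
    StrictAnti ξ := by
  refine strictAnti_nat_of_succ_lt fun n => ?_
  rcases n with _ | n
  · exact h01
  · rw [hξ _ n.succ_pos, hξ _ (n + 1).succ_pos]
    exact hf (mem_Ici.2 (by norm_cast; omega)) (mem_Ici.2 (by norm_cast; omega))
      (by push_cast; linarith)

theorem exists_mem_Ioo_of_tendsto {ξ : ℕ → ℝ} {a y : ℝ}
    (hlim : Tendsto ξ atTop (𝓝 a)) (hay : a < y) (hy : y < ξ 0) (hy' : y ∉ range ξ) :
    ∃ k, y ∈ Ioo (ξ (k + 1)) (ξ k) := by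
  have hex : ∃ k, ξ (k + 1) < y :=
    ((hlim.comp (tendsto_add_atTop_nat 1)).eventually_lt_const hay).exists
  refine ⟨Nat.find hex, Nat.find_spec hex, ?_⟩
  rcases hfind : Nat.find hex with _ | k
  · exact hy
  · have hle : y ≤ ξ (k + 1) := not_lt.1 (Nat.find_min hex (by omega))
    exact lt_of_le_of_ne hle fun h => hy' ⟨k + 1, h.symm⟩

theorem div_mem_Ioo_of_mem_Ioo {a b c y : ℝ} (hab : a < b) (hbc : b < c) (hy : y ∈ Ioo a b) :
    ((b - y) * b + (y - a) * c) / (b - a) ∈ Ioo b c := by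
  have hd : 0 < b - a := sub_pos.2 hab
  obtain ⟨hay, hyb⟩ := hy
  constructor
  · rw [lt_div_iff₀ hd]; nlinarith
  · rw [div_lt_iff₀ hd]; nlinarith

def IsFirstReturnTime {X : Type*} (T : X → X) (Y : Set X) (x : X) (m : ℕ) : Prop :=
  1 ≤ m ∧ T^[m] x ∈ Y ∧ ∀ j : ℕ, 1 ≤ j → j < m → T^[j] x ∉ Y

theorem IsFirstReturnTime.unique {X : Type*} {T : X → X} {Y : Set X} {x : X} {m k : ℕ}
    (hm : IsFirstReturnTime T Y x m) (hk : IsFirstReturnTime T Y x k) : m = k := by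
  rcases lt_trichotomy m k with h | h | h
  · exact absurd hm.2.1 (hk.2.2 m hm.1 h)
  · exact h
  · exact absurd hk.2.1 (hm.2.2 k hk.1 h)

section LadderMap

variable {ξ : ℕ → ℝ} {T : ℝ → ℝ}

/-- `T` maps each rung `[ξ (n + 1), ξ n]`, `n ≥ 1`, affinely onto `[ξ n, ξ (n - 1)]`. -/
def IsAffineLadder (ξ : ℕ → ℝ) (T : ℝ → ℝ) : Prop :=
  ∀ n : ℕ, 1 ≤ n → ∀ x ∈ Icc (ξ (n + 1)) (ξ n),
    T x = ((ξ n - x) * ξ n + (x - ξ (n + 1)) * ξ (n - 1)) / (ξ n - ξ (n + 1))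

theorem ladder_step (hξ : StrictAnti ξ) (hT : IsAffineLadder ξ T) (m : ℕ) {y : ℝ} (hy : y ∈ Ioo (ξ (m + 2)) (ξ (m + 1))) : T y ∈ Ioo (ξ (m + 1)) (ξ m) := by
  rw [hT (m + 1) m.succ_pos y (Ioo_subset_Icc_self hy), Nat.add_sub_cancel]
  exact div_mem_Ioo_of_mem_Ioo (hξ (by omega)) (hξ (by omega)) hy

theorem ladder_iterate (hξ : StrictAnti ξ) (hT : IsAffineLadder ξ T) (n k : ℕ) {y : ℝ} (hy : y ∈ Ioo (ξ (n + k + 1)) (ξ (n + k))) :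
    T^[k] y ∈ Ioo (ξ (n + 1)) (ξ n) := by
  induction k generalizing y with
  | zero => exact hy
  | succ k ih =>
    rw [Function.iterate_succ_apply]
    exact ih (ladder_step hξ hT (n + k) hy)

theorem ladder_isFirstReturnTime (hξ : StrictAnti ξ) (hξ0 : ξ 0 = 1) (hξ1 : ξ 1 = 1 / 2)
    (hT : IsAffineLadder ξ T) (hT' : ∀ x ∈ Ioc (1 / 2 : ℝ) 1, T x = 2 * x - 1)
    {x : ℝ} {k : ℕ} (hx : 1 / 2 < x) (hk : 2 * x - 1 ∈ Ioo (ξ (k + 1)) (ξ k)) :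
    IsFirstReturnTime T (Icc (1 / 2) 1) x (k + 1) := by
  have hxk : ∀ j, T^[j + 1] x = T^[j] (2 * x - 1) := fun j => by
    rw [Function.iterate_succ_apply, hT' x ⟨hx, by linarith [hk.2, hξ.antitone k.zero_le]⟩]
  refine ⟨k.succ_pos, ?_, fun j hj hjk => ?_⟩
  · have h := ladder_iterate hξ hT 0 k (by simpa using hk)
    rw [hξ0, hξ1] at h
    rw [hxk]
    exact Ioo_subset_Icc_self h
  · obtain ⟨i, rfl⟩ := Nat.exists_eq_add_of_le' hj
    obtain ⟨m, rfl⟩ : ∃ m, k = m + 1 + i := ⟨k - 1 - i, by omega⟩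
    have h := ladder_iterate hξ hT (m + 1) i hk
    rw [hxk]
    exact fun hmem => (hmem.1.trans_lt h.2).not_ge (hξ1 ▸ hξ.antitone (by omega))

/-- Besides the endpoints of the level sets, `1/2` is exceptional: `T (1/2) = ξ 0 = 1`, so its
return time is `1`. -/
def ladderBreaks (ξ : ℕ → ℝ) : Set ℝ :=
  insert (1 / 2) (range fun k => (1 + ξ k) / 2)

theorem ladderBreaks_countable (ξ : ℕ → ℝ) : (ladderBreaks ξ).Countable :=
  (countable_range _).insert _

theorem exists_isFirstReturnTime (hξ : StrictAnti ξ) (hlim : Tendsto ξ atTop (𝓝 0))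
    (hξ0 : ξ 0 = 1) (hξ1 : ξ 1 = 1 / 2)
    (hT : IsAffineLadder ξ T) (hT' : ∀ x ∈ Ioc (1 / 2 : ℝ) 1, T x = 2 * x - 1)
    {x : ℝ} (hx : x ∈ Icc (1 / 2) 1) (hxE : x ∉ ladderBreaks ξ) :
    ∃ k, x ∈ Ioo ((1 + ξ (k + 1)) / 2) ((1 + ξ k) / 2) ∧
      IsFirstReturnTime T (Icc (1 / 2) 1) x (k + 1) := by
  simp only [ladderBreaks, mem_insert_iff, mem_range, not_or] at hxE
  have hx' : 1 / 2 < x := lt_of_le_of_ne hx.1 (Ne.symm hxE.1)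
  have hrange : 2 * x - 1 ∉ range ξ := fun ⟨k, hk⟩ => hxE.2 ⟨k, by linarith⟩
  have hlt : 2 * x - 1 < ξ 0 :=
    lt_of_le_of_ne (by linarith [hx.2]) fun h => hrange ⟨0, h.symm⟩
  obtain ⟨k, hk⟩ := exists_mem_Ioo_of_tendsto hlim (by linarith) hlt hrange
  exact ⟨k, ⟨by linarith [hk.1], by linarith [hk.2]⟩,
    ladder_isFirstReturnTime hξ hξ0 hξ1 hT hT' hx' hk⟩

end LadderMap

theorem StrictAnti.le_iff_le_of_mem_Ioo {η : ℕ → ℝ} {x : ℝ} {k : ℕ} (hη : StrictAnti η)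
    (hx : x ∈ Ioo (η (k + 1)) (η k)) (n : ℕ) : x ≤ η n ↔ n ≤ k :=
  ⟨fun h => Nat.lt_succ_iff.1 (hη.lt_iff_gt.1 (hx.1.trans_le h)),
    fun h => hx.2.le.trans (hη.antitone h)⟩

theorem StrictAnti.le_iff_lt_of_mem_Ioo {η : ℕ → ℝ} {x : ℝ} {k : ℕ} (hη : StrictAnti η)
    (hx : x ∈ Ioo (η (k + 1)) (η k)) (n : ℕ) : η n ≤ x ↔ k < n :=
  ⟨fun h => hη.lt_iff_gt.1 (h.trans_lt hx.2),
    fun h => (hη.antitone (Nat.succ_le_of_lt h)).trans hx.1.le⟩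

theorem countable_symmDiff_sep_of_mem_iff {X : Type*} {S B E : Set X} {P : X → Prop}
    (hE : E.Countable) (hB : B ⊆ S) (h : ∀ x ∈ S, x ∉ E → (P x ↔ x ∈ B)) :
    (symmDiff {x | x ∈ S ∧ P x} B).Countable := by
  refine hE.mono fun x hx => ?_
  by_contra hxE
  rcases mem_symmDiff.1 hx with ⟨⟨hS, hP⟩, hxB⟩ | ⟨hxB, hxA⟩
  · exact hxB ((h x hS hxE).1 hP)
  · exact hxA ⟨hB hxB, (h x (hB hxB) hxE).2 hxB⟩

section LevelSets

variable {η : ℕ → ℝ} {τ : ℝ → ℕ} {a b : ℝ} {E : Set ℝ}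

theorem countable_symmDiff_lt_returnTime (hη : StrictAnti η) (hb : ∀ n, η n ≤ b)
    (hE : E.Countable)
    (hret : ∀ x ∈ Icc a b, x ∉ E → ∃ k, x ∈ Ioo (η (k + 1)) (η k) ∧ τ x = k + 1) (n : ℕ) :
    (symmDiff {x | x ∈ Icc a b ∧ n < τ x} (Icc a (η n))).Countable := by
  refine countable_symmDiff_sep_of_mem_iff hE (Icc_subset_Icc_right (hb n)) fun x hx hxE => ?_
  obtain ⟨k, hk, hτk⟩ := hret x hx hxE
  rw [hτk, Nat.lt_succ_iff, ← hη.le_iff_le_of_mem_Ioo hk]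
  exact ⟨fun h => ⟨hx.1, h⟩, And.right⟩

theorem countable_symmDiff_returnTime_eq_one (hη : StrictAnti η) (ha : ∀ n, a ≤ η n)
    (hE : E.Countable)
    (hret : ∀ x ∈ Icc a b, x ∉ E → ∃ k, x ∈ Ioo (η (k + 1)) (η k) ∧ τ x = k + 1) :
    (symmDiff {x | x ∈ Icc a b ∧ τ x = 1} (Icc (η 1) b)).Countable := by
  refine countable_symmDiff_sep_of_mem_iff hE (Icc_subset_Icc_left (ha 1)) fun x hx hxE => ?_
  obtain ⟨k, hk, hτk⟩ := hret x hx hxE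
  rw [hτk, mem_Icc, hη.le_iff_lt_of_mem_Ioo hk]
  exact ⟨fun h => ⟨by omega, hx.2⟩, fun h => by omega⟩

theorem countable_symmDiff_returnTime_eq_succ (hη : StrictAnti η) (ha : ∀ n, a ≤ η n)
    (hb : ∀ n, η n ≤ b) (hE : E.Countable)
    (hret : ∀ x ∈ Icc a b, x ∉ E → ∃ k, x ∈ Ioo (η (k + 1)) (η k) ∧ τ x = k + 1) (n : ℕ) :
    (symmDiff {x | x ∈ Icc a b ∧ τ x = n + 1} (Ioc (η (n + 1)) (η n))).Countable := by
  refine countable_symmDiff_sep_of_mem_iff hE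
    (fun x hx => ⟨(ha _).trans hx.1.le, hx.2.trans (hb n)⟩) fun x hx hxE => ?_
  obtain ⟨k, hk, hτk⟩ := hret x hx hxE
  rw [hτk, mem_Ioc, ← not_le, hη.le_iff_le_of_mem_Ioo hk, hη.le_iff_le_of_mem_Ioo hk]
  omega

theorem volume_lt_returnTime (hη : StrictAnti η) (hb : ∀ n, η n ≤ b)
    (hE : E.Countable)
    (hret : ∀ x ∈ Icc a b, x ∉ E → ∃ k, x ∈ Ioo (η (k + 1)) (η k) ∧ τ x = k + 1) (n : ℕ) :
    volume {x | x ∈ Icc a b ∧ n < τ x} = ENNReal.ofReal (η n - a) := by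
  rw [measure_congr (measure_symmDiff_eq_zero_iff.1
    ((countable_symmDiff_lt_returnTime hη hb hE hret n).measure_zero _)), Real.volume_Icc]

end LevelSets

theorem stmt_18_general (α c ε : ℝ) (hα0 : 0 < α) (hc : 1 < c) (hε : 0 < ε)
    (hsmall : 2 * ε * (1 + 2 * Real.pi / Real.log c) < 1)
    -- the sequence ξ: ξ₀ = 1, ξ_n = (1/2) n^(−α)(1 + 2ε sin((2πα/log c) log n))
    (ξ : ℕ → ℝ) (hξ0 : ξ 0 = 1)
    (hξ : ∀ n : ℕ, 1 ≤ n → ξ n =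
      (1/2) * (n : ℝ) ^ (-α) *
        (1 + 2 * ε * Real.sin ((2 * Real.pi * α / Real.log c) * Real.log (n : ℝ))))
    -- the perturbed Wang map T_ε
    (T : ℝ → ℝ)
    (hT1 : ∀ n : ℕ, 1 ≤ n → ∀ x ∈ Set.Icc (ξ (n + 1)) (ξ n),
      T x = ((ξ n - x) * ξ n + (x - ξ (n + 1)) * ξ (n - 1)) / (ξ n - ξ (n + 1)))
    (hT2 : ∀ x ∈ Set.Ioc (1/2 : ℝ) 1, T x = 2 * x - 1)
    -- the first return time τ of T_ε to Y = [1/2,1]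
    (τ : ℝ → ℕ)
    (hτ : ∀ x ∈ Set.Icc (1/2 : ℝ) 1,
      1 ≤ τ x ∧ T^[τ x] x ∈ Set.Icc (1/2 : ℝ) 1 ∧
      ∀ m : ℕ, 1 ≤ m → m < τ x → T^[m] x ∉ Set.Icc (1/2 : ℝ) 1) :
    (∀ n : ℕ, 1 ≤ n →
      (symmDiff {x : ℝ | x ∈ Set.Icc (1/2 : ℝ) 1 ∧ n < τ x}
        (Set.Icc (1/2 : ℝ) ((1 + ξ n) / 2))).Countable) ∧
    (symmDiff {x : ℝ | x ∈ Set.Icc (1/2 : ℝ) 1 ∧ τ x = 1}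
      (Set.Icc (3/4 : ℝ) 1)).Countable ∧
    (∀ n : ℕ, 1 ≤ n →
      (symmDiff {x : ℝ | x ∈ Set.Icc (1/2 : ℝ) 1 ∧ τ x = n + 1}
        (Set.Ioc ((1 + ξ (n + 1)) / 2) ((1 + ξ n) / 2))).Countable) ∧
    (∀ n : ℕ, 1 ≤ n →
      2 * (volume {x : ℝ | x ∈ Set.Icc (1/2 : ℝ) 1 ∧ n < τ x}).toReal = ξ n) := by
  have hlogc : 0 < log c := log_pos hc
  have hcond : 2 * |ε| * |2 * π * α / log c| < α * (1 - 2 * |ε|) := by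
    rw [abs_of_pos hε, abs_of_pos (by positivity),
      show 2 * ε * (2 * π * α / log c) = α * (2 * ε * (2 * π / log c)) by ring]
    exact mul_lt_mul_of_pos_left (by linarith [mul_add (2 * ε) 1 (2 * π / log c)]) hα0
  have hξ1 : ξ 1 = 1 / 2 := by simp [hξ 1 le_rfl]
  have hanti : StrictAnti ξ := strictAnti_of_strictAntiOn_Ici_one
    (strictAntiOn_wangProfile hα0 hcond) hξ (by rw [hξ0, hξ1]; norm_num)
  have hlim : Tendsto ξ atTop (𝓝 0) :=
    ((tendsto_wangProfile_atTop hα0 ε _).comp tendsto_natCast_atTop_atTop).congr'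
      (eventually_atTop.2 ⟨1, fun n hn => (hξ n hn).symm⟩)
  have hη : StrictAnti fun k => (1 + ξ k) / 2 := fun m n h => by linarith [hanti h]
  have ha : ∀ n, 1 / 2 ≤ (1 + ξ n) / 2 := fun n => by
    linarith [hanti.antitone.le_of_tendsto hlim n]
  have hb : ∀ n, (1 + ξ n) / 2 ≤ 1 := fun n => by linarith [hξ0 ▸ hanti.antitone n.zero_le]
  have hE := ladderBreaks_countable ξ
  have hret : ∀ x ∈ Icc (1 / 2 : ℝ) 1, x ∉ ladderBreaks ξ →
      ∃ k, x ∈ Ioo ((1 + ξ (k + 1)) / 2) ((1 + ξ k) / 2) ∧ τ x = k + 1 := fun x hx hxE =>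
    (exists_isFirstReturnTime hanti hlim hξ0 hξ1 hT1 hT2 hx hxE).imp
      fun k hk => ⟨hk.1, IsFirstReturnTime.unique (hτ x hx) hk.2⟩
  refine ⟨fun n _ => countable_symmDiff_lt_returnTime hη hb hE hret n, ?_,
    fun n _ => countable_symmDiff_returnTime_eq_succ hη ha hb hE hret n, fun n _ => ?_⟩
  · convert countable_symmDiff_returnTime_eq_one hη ha hE hret using 3
    rw [hξ1]; norm_num
  · rw [volume_lt_returnTime hη hb hE hret n, ENNReal.toReal_ofReal (by linarith [ha n])]
    ring

/-- return-time sets and tail for the perturbed Wang map. For `n ≥ 1`,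
`{x ∈ [1/2,1] : τ(x) > n}` coincides up to a countable set with `[1/2,(1+ξ_n)/2]`;
`{τ = 1}` is, up to a countable set, `[3/4,1]` and `{τ = n+1}` is, up to endpoints,
`((1+ξ_{n+1})/2,(1+ξ_n)/2]`; consequently `m(τ > n) = ξ_n` for `n ≥ 1`, where `m` is the
normalized Lebesgue measure on `[1/2,1]`. -/
theorem stmt_18 (α c ε : ℝ) (hα0 : 0 < α) (hα1 : α < 1) (hc : 1 < c) (hε : 0 < ε)
    (hsmall : 2 * ε * (1 + 2 * Real.pi / Real.log c) < 1)
    -- the sequence ξ: ξ₀ = 1, ξ_n = (1/2) n^(−α)(1 + 2ε sin((2πα/log c) log n))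
    (ξ : ℕ → ℝ) (hξ0 : ξ 0 = 1)
    (hξ : ∀ n : ℕ, 1 ≤ n → ξ n =
      (1/2) * (n : ℝ) ^ (-α) *
        (1 + 2 * ε * Real.sin ((2 * Real.pi * α / Real.log c) * Real.log (n : ℝ))))
    -- the perturbed Wang map T_ε
    (T : ℝ → ℝ)
    (hT1 : ∀ n : ℕ, 1 ≤ n → ∀ x ∈ Set.Icc (ξ (n + 1)) (ξ n),
      T x = ((ξ n - x) * ξ n + (x - ξ (n + 1)) * ξ (n - 1)) / (ξ n - ξ (n + 1)))
    (hT2 : ∀ x ∈ Set.Ioc (1/2 : ℝ) 1, T x = 2 * x - 1)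
    -- the first return time τ of T_ε to Y = [1/2,1]
    (τ : ℝ → ℕ)
    (hτ : ∀ x ∈ Set.Icc (1/2 : ℝ) 1,
      1 ≤ τ x ∧ T^[τ x] x ∈ Set.Icc (1/2 : ℝ) 1 ∧
      ∀ m : ℕ, 1 ≤ m → m < τ x → T^[m] x ∉ Set.Icc (1/2 : ℝ) 1) :
    (∀ n : ℕ, 1 ≤ n →
      (symmDiff {x : ℝ | x ∈ Set.Icc (1/2 : ℝ) 1 ∧ n < τ x}
        (Set.Icc (1/2 : ℝ) ((1 + ξ n) / 2))).Countable) ∧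
    (symmDiff {x : ℝ | x ∈ Set.Icc (1/2 : ℝ) 1 ∧ τ x = 1}
      (Set.Icc (3/4 : ℝ) 1)).Countable ∧
    (∀ n : ℕ, 1 ≤ n →
      (symmDiff {x : ℝ | x ∈ Set.Icc (1/2 : ℝ) 1 ∧ τ x = n + 1}
        (Set.Ioc ((1 + ξ (n + 1)) / 2) ((1 + ξ n) / 2))).Countable) ∧
    (∀ n : ℕ, 1 ≤ n →
      2 * (volume {x : ℝ | x ∈ Set.Icc (1/2 : ℝ) 1 ∧ n < τ x}).toReal = ξ n) :=
  stmt_18_general α c ε hα0 hc hε hsmall ξ hξ0 hξ T hT1 hT2 τ hτ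
end
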